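/- arXiv:1909.04969 — 3 statements merged into one kernel-verified Lean document; each statement's English description precedes it below -/
import Mathlib

section
/- Let (F^{j,αβγ})_{j=1,…,N; α,β,γ=0,…,3} be real constants such that for each j, F^{j,αβγ}X_αX_βX_γ = 0 (summed over α,β,γ) for every X∈ℝ⁴ with X_0²=X_1²+X_2²+X_3². Then for each of the ten vector fields Z ∈ {∂_1,∂_2,∂_3,Ω_{12},Ω_{13},Ω_{23},L_1,L_2,L_3,S} there exist real constants (F̃^{j,αβγ}) also satisfying F̃^{j,αβγ}X_αX_βX_γ = 0 for every null X, such that for all smooth functions v,w on ℝ×ℝ³ and each j: Z( F^{j,αβγ}(∂_γ v)(∂²_{αβ}w) ) = F^{j,αβγ}(∂_γ Zv)(∂²_{αβ}w) + F^{j,αβγ}(∂_γ v)(∂²_{αβ}Zw) + F̃^{j,αβγ}(∂_γ v)(∂²_{αβ}w), with summation over repeated Greek indices 0,…,3 and ∂_0=∂_t. -/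
open MeasureTheory Real

noncomputable section

/-- Scalar space-time functions on `ℝ_t × ℝ³_x`. -/
abbrev Fn : Type := ℝ → (Fin 3 → ℝ) → ℝ
abbrev Op : Type := Fn → Fn

/-- time derivative `∂_t` -/
def pt (v : Fn) : Fn := fun t x => deriv (fun s => v s x) t
/-- spatial partial derivative `∂_k` -/
def px (k : Fin 3) (v : Fn) : Fn := fun t x => fderiv ℝ (fun y => v t y) x (Pi.single k 1)
/-- `∂_α`, `α = 0,…,3`, with `∂_0 = ∂_t` -/
def pd : Fin 4 → Op := Fin.cons pt fun k => px k
/-- d'Alembertian `□ = ∂_t² - Δ` -/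
def Box (v : Fn) : Fn := fun t x => pt (pt v) t x - ∑ k, px k (px k v) t x

/-- Euclidean norm `r = |x|` on `ℝ³` -/
def enorm3 (x : Fin 3 → ℝ) : ℝ := Real.sqrt (∑ i, (x i) ^ 2)
/-- Japanese bracket `⟨s⟩ = (1+s²)^{1/2}` -/
def jb (s : ℝ) : ℝ := Real.sqrt (1 + s ^ 2)

/-- rotations `Ω_{ij} = x_i ∂_j - x_j ∂_i` -/
def Omg (i j : Fin 3) (v : Fn) : Fn := fun t x => x i * px j v t x - x j * px i v t x
/-- hyperbolic rotations `L_k = x_k ∂_t + t ∂_k` -/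
def Lk (k : Fin 3) (v : Fn) : Fn := fun t x => x k * pt v t x + t * px k v t x
/-- scaling field `S = t ∂_t + x·∇` -/
def Sop (v : Fn) : Fn := fun t x => t * pt v t x + ∑ i, x i * px i v t x
/-- good derivatives `T_k = ∂_k + (x_k/|x|) ∂_t` -/
def Tgood (k : Fin 3) (v : Fn) : Fn := fun t x => px k v t x + (x k / enorm3 x) * pt v t x

/-- multi-indices (components bounded by 4, enough for all statements) -/
abbrev MI : Type := Fin 3 → Fin 5
def deg (a : MI) : ℕ := ∑ i, (a i : ℕ)
def pxPow (a : MI) : Op := (px 0)^[(a 0 : ℕ)] ∘ (px 1)^[(a 1 : ℕ)] ∘ (px 2)^[(a 2 : ℕ)]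
def omgPow (b : MI) : Op := (Omg 0 1)^[(b 0 : ℕ)] ∘ (Omg 0 2)^[(b 1 : ℕ)] ∘ (Omg 1 2)^[(b 2 : ℕ)]
def lkPow (c : MI) : Op := (Lk 0)^[(c 0 : ℕ)] ∘ (Lk 1)^[(c 1 : ℕ)] ∘ (Lk 2)^[(c 2 : ℕ)]
/-- the monomial `∂_x^a Ω^b L^c S^d` -/
def Gmma (a b c : MI) (d : ℕ) : Op := fun v => pxPow a (omgPow b (lkPow c (Sop^[d] v)))

/-- squared `L²(ℝ³)` norm -/
def sqL2 (f : (Fin 3 → ℝ) → ℝ) : ℝ := ∫ x, (f x) ^ 2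
/-- `L²(ℝ³)` norm -/
def L2 (f : (Fin 3 → ℝ) → ℝ) : ℝ := Real.sqrt (sqL2 f)

/-- energy `E₁` -/
def E1 (v : Fn) (t : ℝ) : ℝ := (1/2) * ∫ x, ((pt v t x) ^ 2 + ∑ k, (px k v t x) ^ 2)

/-- `N_{m+1}(v(t))²` -/
def Nsq (m : ℕ) (v : Fn) (t : ℝ) : ℝ :=
  ∑ a : MI, ∑ b : MI, ∑ c : MI, ∑ d : Fin 5,
    if deg a + deg b + deg c + (d : ℕ) ≤ m ∧ deg c + (d : ℕ) ≤ 1 then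
      E1 (Gmma a b c d v) t else 0

/-- the quantity `Q̃(v(t))` -/
def Qt (v : Fn) (t : ℝ) : ℝ :=
  sqL2 (v t) + (∑ i : Fin 3, ∑ j : Fin 3, if i < j then sqL2 (Omg i j v t) else 0)
    + (∑ k : Fin 3, sqL2 (Lk k v t)) + sqL2 (Sop v t)

/-- `M_{m+1}(v(t))²` -/
def Msq (m : ℕ) (v : Fn) (t : ℝ) : ℝ :=
  ∑ a : MI, ∑ b : MI, if deg a + deg b ≤ m then Qt (pxPow a (omgPow b v)) t else 0

/-- `X_m(v(t))²` -/
def Xsq (m : ℕ) (v : Fn) (t : ℝ) : ℝ :=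
  ∑ b : MI, if deg b ≤ m then sqL2 (omgPow b v t) else 0

/-- ghost-weight quantity `G(v(t))²` -/
def Gsq (η : ℝ) (v : Fn) (t : ℝ) : ℝ :=
  ∑ k : Fin 3,
    ((∑ a : MI, ∑ b : MI, ∑ c : MI, ∑ d : Fin 5,
        if deg a + deg b + deg c + (d : ℕ) ≤ 3 ∧ deg c + (d : ℕ) ≤ 1 then
          sqL2 (fun x => jb (t - enorm3 x) ^ (-(1/2 : ℝ) - η) * Tgood k (Gmma a b c d v) t x)
        else 0)
      + (∑ a : MI, ∑ b : MI, ∑ c : MI, ∑ d : Fin 5,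
        if deg a + deg b + deg c + (d : ℕ) ≤ 2 ∧ deg c + (d : ℕ) ≤ 1 then
          sqL2 (fun x => jb (t - enorm3 x) ^ (-(1/2 : ℝ) - η) * Tgood k (pt (Gmma a b c d v)) t x)
        else 0))

/-- localized-energy quantity `L(v(t))²` -/
def Lsq (v : Fn) (t : ℝ) : ℝ :=
  ∑ a : MI, ∑ b : MI, ∑ c : MI, ∑ d : Fin 5,
    if deg a + deg b + deg c + (d : ℕ) ≤ 3 ∧ deg c + (d : ℕ) ≤ 1 then
      sqL2 (fun x => enorm3 x ^ (-(5/4 : ℝ)) * Gmma a b c d v t x)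
        + ∑ α : Fin 4, sqL2 (fun x => enorm3 x ^ (-(1/4 : ℝ)) * pd α (Gmma a b c d v) t x)
    else 0

variable {N : ℕ}

/-- vector-valued versions of the norms -/
def NV (m : ℕ) (u : Fin N → Fn) (t : ℝ) : ℝ := Real.sqrt (∑ i, Nsq m (u i) t)
def MV (m : ℕ) (u : Fin N → Fn) (t : ℝ) : ℝ := Real.sqrt (∑ i, Msq m (u i) t)
def XV (m : ℕ) (u : Fin N → Fn) (t : ℝ) : ℝ := Real.sqrt (∑ i, Xsq m (u i) t)
def GV (η : ℝ) (u : Fin N → Fn) (t : ℝ) : ℝ := Real.sqrt (∑ i, Gsq η (u i) t)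
def LsqV (u : Fin N → Fn) (t : ℝ) : ℝ := ∑ i, Lsq (u i) t

/-- purely spatial functions and fields -/
abbrev SFn : Type := (Fin 3 → ℝ) → ℝ
def sdx (k : Fin 3) (f : SFn) : SFn := fun x => fderiv ℝ f x (Pi.single k 1)
def sOmg (i j : Fin 3) (f : SFn) : SFn := fun x => x i * sdx j f x - x j * sdx i f x
/-- `Λ = x·∇` -/
def sLam (f : SFn) : SFn := fun x => ∑ i, x i * sdx i f x
def sdxPow (a : MI) : SFn → SFn := (sdx 0)^[(a 0 : ℕ)] ∘ (sdx 1)^[(a 1 : ℕ)] ∘ (sdx 2)^[(a 2 : ℕ)]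
def sOmgPow (b : MI) : SFn → SFn :=
  (sOmg 0 1)^[(b 0 : ℕ)] ∘ (sOmg 0 2)^[(b 1 : ℕ)] ∘ (sOmg 1 2)^[(b 2 : ℕ)]
/-- `‖∂_x f‖_{L²}` (gradient) -/
def gradL2 (f : SFn) : ℝ := Real.sqrt (∑ k : Fin 3, sqL2 (sdx k f))

/-- the weighted data norm `D(f,g)` -/
def Dfg (f g : Fin N → SFn) : ℝ :=
  ∑ i,
    ((∑ a : MI, ∑ b : MI, if deg a + deg b ≤ 3 then
        gradL2 (sdxPow a (sOmgPow b (f i))) + L2 (sdxPow a (sOmgPow b (g i))) else 0)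
    + (∑ a : MI, ∑ b : MI, if deg a + deg b ≤ 2 then
        gradL2 (sdxPow a (sOmgPow b (sLam (f i)))) + L2 (sdxPow a (sOmgPow b (sLam (g i)))) else 0)
    + L2 (f i)
    + (∑ b : MI, if deg b ≤ 2 then
        (∑ j : Fin 3, ∑ k : Fin 3, if j < k then L2 (sOmgPow b (sOmg j k (f i))) else 0)
          + L2 (sOmgPow b (sLam (f i)))
          + L2 (fun x => enorm3 x * sOmgPow b (g i) x) else 0))

/-- variables `(u, ∂u)` of the cubic nonlinearities -/
abbrev PolyVar (N : ℕ) := Sum (Fin N) (Fin N × Fin 4)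
def uVars (u : Fin N → Fn) (t : ℝ) (x : Fin 3 → ℝ) : PolyVar N → ℝ :=
  Sum.elim (fun j => u j t x) fun p => pd p.2 (u p.1) t x

/-- null condition for cubic (quasilinear) coefficients -/
def NullC3 (F : Fin 4 → Fin 4 → Fin 4 → ℝ) : Prop :=
  ∀ X : Fin 4 → ℝ, X 0 ^ 2 = X 1 ^ 2 + X 2 ^ 2 + X 3 ^ 2 →
    (∑ α, ∑ β, ∑ γ, F α β γ * X α * X β * X γ) = 0

/-- null condition for quadratic (semilinear) coefficients -/
def NullC2 (F : Fin 4 → Fin 4 → ℝ) : Prop :=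
  ∀ X : Fin 4 → ℝ, X 0 ^ 2 = X 1 ^ 2 + X 2 ^ 2 + X 3 ^ 2 →
    (∑ α, ∑ β, F α β * X α * X β) = 0

/-- a quasi-linear system of wave equations satisfying the null condition -/
structure NullSystem (N : ℕ) where
  Fc : Fin N → Fin N → Fin 4 → Fin 4 → Fin 4 → ℝ
  Fq : Fin N → Fin N → Fin N → Fin 4 → Fin 4 → ℝ
  Gp : Fin N → Fin 4 → Fin 4 → MvPolynomial (PolyVar N) ℝ
  Hp : Fin N → MvPolynomial (PolyVar N) ℝ
  Fc_symm : ∀ i j α β γ, Fc i j α β γ = Fc i j β α γ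
  Gp_symm : ∀ i α β, Gp i α β = Gp i β α
  Gp_hom : ∀ i α β, (Gp i α β).IsHomogeneous 2
  Hp_hom : ∀ i, (Hp i).IsHomogeneous 3
  null3 : ∀ i j, NullC3 (Fc i j)
  null2 : ∀ i j k, NullC2 (Fq i j k)

/-- left-hand side `□u_i + F_i(∂u,∂²u) + C_i(u,∂u,∂²u)` -/
def eqnLHS (𝒮 : NullSystem N) (u : Fin N → Fn) (i : Fin N) : Fn := fun t x =>
  Box (u i) t x
  + (∑ j, ∑ α, ∑ β, ∑ γ, 𝒮.Fc i j α β γ * pd γ (u j) t x * pd α (pd β (u i)) t x)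
  + (∑ j, ∑ k, ∑ α, ∑ β, 𝒮.Fq i j k α β * pd α (u j) t x * pd β (u k) t x)
  + (∑ α, ∑ β, MvPolynomial.eval (uVars u t x) (𝒮.Gp i α β) * pd α (pd β (u i)) t x)
  + MvPolynomial.eval (uVars u t x) (𝒮.Hp i)

/-- global classical solution of the Cauchy problem -/
def IsGlobalSolution (𝒮 : NullSystem N) (f g : Fin N → SFn) (u : Fin N → Fn) : Prop :=
  (∀ i, ContDiff ℝ 2 (Function.uncurry (u i)))
  ∧ (∀ i, ∀ t > (0 : ℝ), ∀ x, eqnLHS 𝒮 u i t x = 0)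
  ∧ (∀ i x, u i 0 x = f i x) ∧ (∀ i x, pt (u i) 0 x = g i x)

/-- smooth solution on a time slab `[0,T)` -/
def IsSmoothSolutionOn (𝒮 : NullSystem N) (f g : Fin N → SFn) (u : Fin N → Fn) (T : ℝ) : Prop :=
  (∀ i, ContDiff ℝ (⊤ : ℕ∞) (Function.uncurry (u i)))
  ∧ (∀ i, ∀ t, 0 < t → t < T → ∀ x, eqnLHS 𝒮 u i t x = 0)
  ∧ (∀ i x, u i 0 x = f i x) ∧ (∀ i x, pt (u i) 0 x = g i x)

/-- `L^∞(ℝ³)` norm at time `t` -/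
def Linf (v : Fn) (t : ℝ) : ℝ := ⨆ x, |v t x|
/-- `L^∞` norm of the full space-time gradient at time `t` -/
def LinfD (v : Fn) (t : ℝ) : ℝ := ⨆ x, Real.sqrt (∑ α : Fin 4, (pd α v t x) ^ 2)

/-- the pointwise bootstrap quantity `⟨⟨u(t)⟩⟩` -/
def bra (δ : ℝ) (u : Fin N → Fn) (t : ℝ) : ℝ :=
  ∑ i,
    ((∑ a : MI, ∑ b : MI, if deg a + deg b ≤ 1 then
        jb t * LinfD (pxPow a (omgPow b (u i))) t else 0)
    + (∑ k : Fin 3, LinfD (Lk k (u i)) t) + LinfD (Sop (u i)) t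
    + (∑ b : MI, if deg b ≤ 1 then jb t ^ (1 - δ) * Linf (omgPow b (u i)) t else 0)
    + (∑ b : MI, if deg b = 2 then Linf (omgPow b (u i)) t else 0)
    + (∑ b : MI, if deg b ≤ 1 then
        jb t ^ (-δ) * ((∑ k : Fin 3, Linf (omgPow b (Lk k (u i))) t)
          + Linf (omgPow b (Sop (u i))) t) else 0))


namespace NCP
abbrev E4 := ℝ × (Fin 3 → ℝ)
def ee : Fin 4 → E4 := Fin.cons (1, 0) (fun k => (0, Pi.single k 1))
def DD (α : Fin 4) (f : E4 → ℝ) : E4 → ℝ := fun p => fderiv ℝ f p (ee α)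
abbrev Sm (f : E4 → ℝ) : Prop := ContDiff ℝ (⊤ : ℕ∞) f

lemma sd {f : E4 → ℝ} (h : Sm f) (p : E4) : DifferentiableAt ℝ f p :=
  h.differentiable (by simp) p

lemma DD_contDiff {f} (h : Sm f) (α : Fin 4) : Sm (DD α f) :=
  (h.fderiv_right (le_refl _)).clm_apply contDiff_const

lemma pt_apply (v : Fn) (t : ℝ) (x : Fin 3 → ℝ)
    (h : DifferentiableAt ℝ (Function.uncurry v) (t, x)) :
    pt v t x = DD 0 (Function.uncurry v) (t, x) := by
  have h1 : HasDerivAt (fun s : ℝ => (s, x)) ((1:ℝ), (0 : Fin 3 → ℝ)) t :=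
    (hasDerivAt_id t).prodMk (hasDerivAt_const t x)
  have h2 := h.hasFDerivAt.comp_hasDerivAt t h1
  have : pt v t x = fderiv ℝ (Function.uncurry v) (t, x) (1, 0) := h2.deriv
  rw [this]; rfl

lemma px_apply (v : Fn) (k : Fin 3) (t : ℝ) (x : Fin 3 → ℝ)
    (h : DifferentiableAt ℝ (Function.uncurry v) (t, x)) :
    px k v t x = DD k.succ (Function.uncurry v) (t, x) := by
  have h1 : HasFDerivAt (fun y : Fin 3 → ℝ => ((t:ℝ), y))
      (ContinuousLinearMap.inr ℝ ℝ (Fin 3 → ℝ)) x :=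
    (hasFDerivAt_const t x).prodMk (hasFDerivAt_id x)
  have h2 := h.hasFDerivAt.comp x h1
  have : px k v t x = fderiv ℝ (Function.uncurry v) (t, x) (0, Pi.single k 1) := by
    show fderiv ℝ (fun y => v t y) x (Pi.single k 1) = _
    rw [show (fun y => v t y) = Function.uncurry v ∘ Prod.mk t from rfl, h2.fderiv]
    simp
  rw [this]; simp [DD, ee]

lemma pd_apply (v : Fn) (α : Fin 4) (t : ℝ) (x : Fin 3 → ℝ)
    (h : DifferentiableAt ℝ (Function.uncurry v) (t, x)) :
    pd α v t x = DD α (Function.uncurry v) (t, x) := by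
  induction α using Fin.cases with
  | zero => simpa [pd] using pt_apply v t x h
  | succ k => simpa [pd] using px_apply v k t x h

lemma uncurry_pd {v : Fn} (h : Sm (Function.uncurry v)) (α : Fin 4) :
    Function.uncurry (pd α v) = DD α (Function.uncurry v) := by
  funext p
  obtain ⟨t, x⟩ := p
  exact pd_apply v α t x (sd h _)

lemma pd2_apply {w : Fn} (h : Sm (Function.uncurry w)) (α β : Fin 4) (t : ℝ) (x : Fin 3 → ℝ) :
    pd α (pd β w) t x = DD α (DD β (Function.uncurry w)) (t, x) := by
  have h1 : Function.uncurry (pd β w) = DD β (Function.uncurry w) := uncurry_pd h β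
  rw [pd_apply (pd β w) α t x (by rw [h1]; exact sd (DD_contDiff h β) _), h1]

lemma DD_comm {f} (h : Sm f) (α β : Fin 4) (p : E4) :
    DD α (DD β f) p = DD β (DD α f) p := by
  have hd : ∀ y, HasFDerivAt f (fderiv ℝ f y) y := fun y => (sd h y).hasFDerivAt
  have hf' : ContDiff ℝ (⊤ : ℕ∞) (fderiv ℝ f) := h.fderiv_right (le_refl _)
  have h2 : HasFDerivAt (fderiv ℝ f) (fderiv ℝ (fderiv ℝ f) p) p :=
    (hf'.differentiable (by simp) p).hasFDerivAt
  have key := second_derivative_symmetric hd h2 (ee α) (ee β)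
  have e1 : ∀ γ δ : Fin 4, DD γ (DD δ f) p = fderiv ℝ (fderiv ℝ f) p (ee γ) (ee δ) := by
    intro γ δ
    have hc : HasFDerivAt (fun q => fderiv ℝ f q (ee δ))
        (((fderiv ℝ (fderiv ℝ f) p).flip) (ee δ)) p := by
      simpa using h2.clm_apply (hasFDerivAt_const (ee δ) p)
    have h3 := hc.fderiv
    show fderiv ℝ (fun q => fderiv ℝ f q (ee δ)) p (ee γ) = _
    rw [h3]; rfl
  rw [e1, e1]
  exact key.symm ▸ rfl

variable {p : E4}

lemma DD_sum {ι : Type*} (s : Finset ι) (g : ι → E4 → ℝ)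
    (hg : ∀ i ∈ s, DifferentiableAt ℝ (g i) p) (α : Fin 4) :
    DD α (fun q => ∑ i ∈ s, g i q) p = ∑ i ∈ s, DD α (g i) p := by
  simp only [DD]; rw [fderiv_fun_sum hg]; simp

lemma DD_mul {g h : E4 → ℝ} (hg : DifferentiableAt ℝ g p) (hh : DifferentiableAt ℝ h p)
    (α : Fin 4) :
    DD α (fun q => g q * h q) p = DD α g p * h p + g p * DD α h p := by
  simp only [DD]; rw [fderiv_fun_mul hg hh]
  simp only [ContinuousLinearMap.add_apply, ContinuousLinearMap.smul_apply, smul_eq_mul]; ring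

lemma DD_const_mul {g : E4 → ℝ} (hg : DifferentiableAt ℝ g p) (c : ℝ) (α : Fin 4) :
    DD α (fun q => c * g q) p = c * DD α g p := by
  simp only [DD]; rw [fderiv_const_mul hg]; simp

lemma DD_sub {g h : E4 → ℝ} (hg : DifferentiableAt ℝ g p) (hh : DifferentiableAt ℝ h p)
    (α : Fin 4) :
    DD α (fun q => g q - h q) p = DD α g p - DD α h p := by
  simp only [DD]; rw [fderiv_fun_sub hg hh]; simp

variable (L : Fin 4 → (E4 →L[ℝ] ℝ)) (kc : Fin 4 → ℝ)

def ZU (f : E4 → ℝ) : E4 → ℝ := fun q => ∑ μ, (L μ q + kc μ) * DD μ f q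

def BB : Fin 4 → Fin 4 → ℝ := fun ν μ => L μ (ee ν)

lemma coeff_smooth (μ : Fin 4) : ContDiff ℝ (⊤:ℕ∞) (fun q : E4 => L μ q + kc μ) :=
  (L μ).contDiff.add contDiff_const

lemma ZU_contDiff {f} (h : Sm f) : Sm (ZU L kc f) := by
  apply ContDiff.sum
  intro μ _
  exact (coeff_smooth L kc μ).mul (DD_contDiff h μ)

lemma DD_coeff (μ ν : Fin 4) (p : E4) :
    DD ν (fun q : E4 => L μ q + kc μ) p = BB L ν μ := by
  simp only [DD, BB]
  rw [fderiv_add_const, ContinuousLinearMap.fderiv]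

lemma comm_key {f} (h : Sm f) (ν : Fin 4) (p : E4) :
    ZU L kc (DD ν f) p = DD ν (ZU L kc f) p - ∑ μ, BB L ν μ * DD μ f p := by
  have hdiff : ∀ μ : Fin 4, ∀ q, DifferentiableAt ℝ (DD μ f) q := fun μ q =>
    sd (DD_contDiff h μ) q
  have step : DD ν (ZU L kc f) p
      = ∑ μ, (BB L ν μ * DD μ f p + (L μ p + kc μ) * DD μ (DD ν f) p) := by
    rw [show ZU L kc f = fun q => ∑ μ, (L μ q + kc μ) * DD μ f q from rfl]
    rw [DD_sum (p := p) Finset.univ (fun μ q => (L μ q + kc μ) * DD μ f q) (fun μ _ =>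
      (sd (coeff_smooth L kc μ) p).mul (hdiff μ p)) ν]
    refine Finset.sum_congr rfl fun μ _ => ?_
    rw [DD_mul (sd (coeff_smooth L kc μ) p) (hdiff μ p) ν, DD_coeff, DD_comm h μ ν p]
  rw [step, Finset.sum_add_distrib]
  simp [ZU]

lemma ZU_sum {ι : Type*} (s : Finset ι) (g : ι → E4 → ℝ)
    (hg : ∀ i ∈ s, Sm (g i)) (p : E4) :
    ZU L kc (fun q => ∑ i ∈ s, g i q) p = ∑ i ∈ s, ZU L kc (g i) p := by
  simp only [ZU]
  rw [Finset.sum_comm]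
  refine Finset.sum_congr rfl fun i hi => ?_
  rw [DD_sum s g (fun i hi => sd (hg i hi) p) i, Finset.mul_sum]

lemma ZU_mul {g h : E4 → ℝ} (hg : DifferentiableAt ℝ g p) (hh : DifferentiableAt ℝ h p) :
    ZU L kc (fun q => g q * h q) p = ZU L kc g p * h p + g p * ZU L kc h p := by
  simp only [ZU, Finset.sum_mul, Finset.mul_sum, ← Finset.sum_add_distrib]
  refine Finset.sum_congr rfl fun μ _ => ?_
  rw [DD_mul hg hh]
  ring

lemma ZU_const_mul {g : E4 → ℝ} (hg : DifferentiableAt ℝ g p) (c : ℝ) :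
    ZU L kc (fun q => c * g q) p = c * ZU L kc g p := by
  simp only [ZU, Finset.mul_sum]
  refine Finset.sum_congr rfl fun μ _ => ?_
  rw [DD_const_mul hg]
  ring

lemma comm2 {W : E4 → ℝ} (hw : Sm W) (α β : Fin 4) (p : E4) :
    ZU L kc (DD α (DD β W)) p
      = DD α (DD β (ZU L kc W)) p - (∑ ρ, BB L β ρ * DD α (DD ρ W) p)
        - ∑ ρ, BB L α ρ * DD ρ (DD β W) p := by
  have h1 := comm_key L kc (DD_contDiff hw β) α p
  have h2 : ZU L kc (DD β W) = fun q =>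
      DD β (ZU L kc W) q - ∑ ρ, BB L β ρ * DD ρ W q :=
    funext fun q => comm_key L kc hw β q
  have h3 : DD α (ZU L kc (DD β W)) p
      = DD α (DD β (ZU L kc W)) p - ∑ ρ, BB L β ρ * DD α (DD ρ W) p := by
    rw [h2]
    rw [DD_sub (sd (DD_contDiff (ZU_contDiff L kc hw) β) p)
      (by
        apply DifferentiableAt.fun_sum
        intro ρ _
        exact (sd (DD_contDiff hw ρ) p).const_mul _) α]
    rw [DD_sum (p := p) Finset.univ (fun ρ q => BB L β ρ * DD ρ W q)
      (fun ρ _ => (sd (DD_contDiff hw ρ) p).const_mul _) α]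
    congr 1
    exact Finset.sum_congr rfl fun ρ _ => DD_const_mul (sd (DD_contDiff hw ρ) p) _ α
  rw [h1, h3]


set_option maxHeartbeats 1000000 in
lemma algebra_main (F : Fin 4 → Fin 4 → Fin 4 → ℝ) (B : Fin 4 → Fin 4 → ℝ)
    (a aZ : Fin 4 → ℝ) (m mZ : Fin 4 → Fin 4 → ℝ) :
    ∑ α, ∑ β, ∑ γ, (F α β γ *
        ((aZ γ - ∑ ρ, B γ ρ * a ρ) * m α β
          + a γ * (mZ α β - (∑ ρ, B β ρ * m α ρ) - ∑ ρ, B α ρ * m ρ β)))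
    = (∑ α, ∑ β, ∑ γ, F α β γ * aZ γ * m α β)
      + (∑ α, ∑ β, ∑ γ, F α β γ * a γ * mZ α β)
      + ∑ α, ∑ β, ∑ γ,
          (-(∑ ρ, (B ρ α * F ρ β γ + B ρ β * F α ρ γ + B ρ γ * F α β ρ))) * a γ * m α β := by
  simp only [Fin.sum_univ_four]
  ring

lemma master {V W : E4 → ℝ} (hv : Sm V) (hw : Sm W) (F : Fin 4 → Fin 4 → Fin 4 → ℝ)
    (p : E4) :
    ZU L kc (fun q => ∑ α, ∑ β, ∑ γ, F α β γ * DD γ V q * DD α (DD β W) q) p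
    = (∑ α, ∑ β, ∑ γ, F α β γ * DD γ (ZU L kc V) p * DD α (DD β W) p)
      + (∑ α, ∑ β, ∑ γ, F α β γ * DD γ V p * DD α (DD β (ZU L kc W)) p)
      + ∑ α, ∑ β, ∑ γ,
          (-(∑ ρ, (BB L ρ α * F ρ β γ + BB L ρ β * F α ρ γ + BB L ρ γ * F α β ρ)))
            * DD γ V p * DD α (DD β W) p := by
  have hDV : ∀ γ : Fin 4, Sm (DD γ V) := fun γ => DD_contDiff hv γ
  have hDDW : ∀ α β : Fin 4, Sm (DD α (DD β W)) := fun α β => DD_contDiff (DD_contDiff hw β) α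
  have hterm : ∀ α β γ : Fin 4, Sm (fun q => F α β γ * DD γ V q * DD α (DD β W) q) :=
    fun α β γ => (contDiff_const.mul (hDV γ)).mul (hDDW α β)
  have hin2 : ∀ α β : Fin 4, Sm (fun q => ∑ γ, F α β γ * DD γ V q * DD α (DD β W) q) :=
    fun α β => ContDiff.sum fun γ _ => hterm α β γ
  have hin1 : ∀ α : Fin 4, Sm (fun q => ∑ β, ∑ γ, F α β γ * DD γ V q * DD α (DD β W) q) :=
    fun α => ContDiff.sum fun β _ => hin2 α β
  have step : ZU L kc (fun q => ∑ α, ∑ β, ∑ γ, F α β γ * DD γ V q * DD α (DD β W) q) p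
      = ∑ α, ∑ β, ∑ γ, (F α β γ *
          ((DD γ (ZU L kc V) p - ∑ ρ, BB L γ ρ * DD ρ V p) * DD α (DD β W) p
            + DD γ V p * (DD α (DD β (ZU L kc W)) p - (∑ ρ, BB L β ρ * DD α (DD ρ W) p)
                - ∑ ρ, BB L α ρ * DD ρ (DD β W) p))) := by
    rw [ZU_sum L kc Finset.univ _ (fun α _ => hin1 α) p]
    refine Finset.sum_congr rfl fun α _ => ?_
    rw [ZU_sum L kc Finset.univ _ (fun β _ => hin2 α β) p]
    refine Finset.sum_congr rfl fun β _ => ?_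
    rw [ZU_sum L kc Finset.univ _ (fun γ _ => hterm α β γ) p]
    refine Finset.sum_congr rfl fun γ _ => ?_
    rw [ZU_mul L kc (((contDiff_const.mul (hDV γ))).differentiable (by simp) p)
      (sd (hDDW α β) p),
      ZU_const_mul L kc (sd (hDV γ) p) (F α β γ),
      comm_key L kc hv γ p, comm2 L kc hw α β p]
    ring
  rw [step]
  exact algebra_main (F) (BB L) (fun γ => DD γ V p) (fun γ => DD γ (ZU L kc V) p)
    (fun α β => DD α (DD β W) p) (fun α β => DD α (DD β (ZU L kc W)) p)


lemma null_pres (F : Fin 4 → Fin 4 → Fin 4 → ℝ) (hF : NullC3 F) (B : Fin 4 → Fin 4 → ℝ)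
    (hB : ∀ X : Fin 4 → ℝ, X 0 ^ 2 = X 1 ^ 2 + X 2 ^ 2 + X 3 ^ 2 →
      ∃ c : ℝ → Fin 4 → ℝ, (∀ μ, c 0 μ = X μ) ∧
        (∀ s, (c s 0) ^ 2 = (c s 1) ^ 2 + (c s 2) ^ 2 + (c s 3) ^ 2) ∧
        (∀ μ, HasDerivAt (fun s => c s μ) (∑ ρ, B μ ρ * X ρ) 0)) :
    NullC3 (fun α β γ => -(∑ ρ, (B ρ α * F ρ β γ + B ρ β * F α ρ γ + B ρ γ * F α β ρ))) := by
  intro X hX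
  obtain ⟨c, hc0, hcnull, hcd⟩ := hB X hX
  set Y : Fin 4 → ℝ := fun μ => ∑ ρ, B μ ρ * X ρ with hY
  have hder : HasDerivAt (fun s => ∑ α, ∑ β, ∑ γ, F α β γ * c s α * c s β * c s γ)
      (∑ α, ∑ β, ∑ γ, (F α β γ * (Y α * X β * X γ + X α * Y β * X γ + X α * X β * Y γ))) 0 := by
    apply HasDerivAt.fun_sum; intro α _
    apply HasDerivAt.fun_sum; intro β _
    apply HasDerivAt.fun_sum; intro γ _
    have h1 : HasDerivAt (fun s => F α β γ * c s α) (F α β γ * Y α) 0 :=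
      (hcd α).const_mul _
    have h2 := (h1.fun_mul (hcd β)).fun_mul (hcd γ)
    simp only [hc0] at h2
    rw [show (F α β γ * (Y α * X β * X γ + X α * Y β * X γ + X α * X β * Y γ)) = (F α β γ * Y α * X β + F α β γ * X α * Y β) * X γ + F α β γ * X α * X β * Y γ by ring]
    exact h2
  have hzero : (fun s => ∑ α, ∑ β, ∑ γ, F α β γ * c s α * c s β * c s γ) = fun _ => (0:ℝ) := by
    funext s
    exact hF (c s) (hcnull s)
  rw [hzero] at hder
  have hD : (∑ α, ∑ β, ∑ γ,
      (F α β γ * (Y α * X β * X γ + X α * Y β * X γ + X α * X β * Y γ))) = 0 := by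
    have := (hasDerivAt_const (0:ℝ) (0:ℝ)).unique hder
    linarith [this]
  have expand : (∑ α, ∑ β, ∑ γ,
      (-(∑ ρ, (B ρ α * F ρ β γ + B ρ β * F α ρ γ + B ρ γ * F α β ρ))) * X α * X β * X γ)
      = -(∑ α, ∑ β, ∑ γ, (F α β γ * (Y α * X β * X γ + X α * Y β * X γ + X α * X β * Y γ))) := by
    simp only [hY, Fin.sum_univ_four]
    ring
  rw [expand, hD, neg_zero]

theorem master_final (Nn : ℕ) (F : Fin Nn → Fin 4 → Fin 4 → Fin 4 → ℝ)
    (hF : ∀ j, NullC3 (F j)) (Z : Op)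
    (hZc : ∀ (u : Fn) (t : ℝ) (x : Fin 3 → ℝ),
      DifferentiableAt ℝ (Function.uncurry u) (t, x) →
      Z u t x = ZU L kc (Function.uncurry u) (t, x))
    (hB : ∀ X : Fin 4 → ℝ, X 0 ^ 2 = X 1 ^ 2 + X 2 ^ 2 + X 3 ^ 2 →
      ∃ c : ℝ → Fin 4 → ℝ, (∀ μ, c 0 μ = X μ) ∧
        (∀ s, (c s 0) ^ 2 = (c s 1) ^ 2 + (c s 2) ^ 2 + (c s 3) ^ 2) ∧
        (∀ μ, HasDerivAt (fun s => c s μ) (∑ ρ, BB L μ ρ * X ρ) 0)) :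
    ∃ Ft : Fin Nn → Fin 4 → Fin 4 → Fin 4 → ℝ,
      (∀ j, NullC3 (Ft j)) ∧
      ∀ v w : Fn, ContDiff ℝ (⊤ : ℕ∞) (Function.uncurry v) → ContDiff ℝ (⊤ : ℕ∞) (Function.uncurry w) →
        ∀ j t x,
          Z (fun s y => ∑ α, ∑ β, ∑ γ, F j α β γ * pd γ v s y * pd α (pd β w) s y) t x
          = (∑ α, ∑ β, ∑ γ, F j α β γ * pd γ (Z v) t x * pd α (pd β w) t x)
            + (∑ α, ∑ β, ∑ γ, F j α β γ * pd γ v t x * pd α (pd β (Z w)) t x)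
            + (∑ α, ∑ β, ∑ γ, Ft j α β γ * pd γ v t x * pd α (pd β w) t x) := by
  refine ⟨fun j α β γ =>
    -(∑ ρ, (BB L ρ α * F j ρ β γ + BB L ρ β * F j α ρ γ + BB L ρ γ * F j α β ρ)),
    fun j => null_pres (F j) (hF j) (BB L) hB, ?_⟩
  intro v w hv hw j t x
  have hv' : Sm (Function.uncurry v) := hv.of_le (by simp)
  have hw' : Sm (Function.uncurry w) := hw.of_le (by simp)
  set V := Function.uncurry v with hVdef
  set W := Function.uncurry w with hWdef
  have hU : Function.uncurry
      (fun s y => ∑ α, ∑ β, ∑ γ, F j α β γ * pd γ v s y * pd α (pd β w) s y)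
      = fun q => ∑ α, ∑ β, ∑ γ, F j α β γ * DD γ V q * DD α (DD β W) q := by
    funext q
    obtain ⟨s, y⟩ := q
    show (∑ α, ∑ β, ∑ γ, F j α β γ * pd γ v s y * pd α (pd β w) s y) = _
    refine Finset.sum_congr rfl fun α _ => Finset.sum_congr rfl fun β _ =>
      Finset.sum_congr rfl fun γ _ => ?_
    rw [pd_apply v γ s y (sd hv' _), pd2_apply hw' α β s y]
  have hPsm : Sm (fun q => ∑ α, ∑ β, ∑ γ, F j α β γ * DD γ V q * DD α (DD β W) q) :=
    ContDiff.sum fun α _ => ContDiff.sum fun β _ => ContDiff.sum fun γ _ =>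
      (contDiff_const.mul (DD_contDiff hv' γ)).mul (DD_contDiff (DD_contDiff hw' β) α)
  have hZv : Function.uncurry (Z v) = ZU L kc V := by
    funext q
    obtain ⟨s, y⟩ := q
    exact hZc v s y (sd hv' _)
  have hZw : Function.uncurry (Z w) = ZU L kc W := by
    funext q
    obtain ⟨s, y⟩ := q
    exact hZc w s y (sd hw' _)
  have E1 : ∀ γ : Fin 4, pd γ v t x = DD γ V (t, x) := fun γ => pd_apply v γ t x (sd hv' _)
  have E2 : ∀ α β : Fin 4, pd α (pd β w) t x = DD α (DD β W) (t, x) := fun α β =>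
    pd2_apply hw' α β t x
  have e1 : ∀ γ : Fin 4, pd γ (Z v) t x = DD γ (ZU L kc V) (t, x) := by
    intro γ
    rw [pd_apply (Z v) γ t x (by rw [hZv]; exact sd (ZU_contDiff L kc hv') _), hZv]
  have e2 : ∀ α β : Fin 4, pd α (pd β (Z w)) t x = DD α (DD β (ZU L kc W)) (t, x) := by
    intro α β
    rw [pd2_apply (w := Z w) (by rw [hZw]; exact ZU_contDiff L kc hw') α β t x, hZw]
  simp only [E1, E2, e1, e2]
  rw [hZc _ t x (by rw [hU]; exact sd hPsm _), hU]
  exact master L kc hv' hw' (F j) (t, x)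

end NCP

namespace NCP

def Ct : E4 →L[ℝ] ℝ := ContinuousLinearMap.fst ℝ ℝ (Fin 3 → ℝ)
def Cx (i : Fin 3) : E4 →L[ℝ] ℝ :=
  (ContinuousLinearMap.proj i).comp (ContinuousLinearMap.snd ℝ ℝ (Fin 3 → ℝ))
@[simp] lemma Ct_apply (p : E4) : Ct p = p.1 := rfl
@[simp] lemma Cx_apply (i : Fin 3) (p : E4) : Cx i p = p.2 i := rfl
lemma ee0 : ee 0 = (1, 0) := rfl
lemma ee1 : ee 1 = (0, Pi.single 0 1) := rfl
lemma ee2 : ee 2 = (0, Pi.single 1 1) := rfl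
lemma ee3 : ee 3 = (0, Pi.single 2 1) := rfl
lemma s0 : ((0:Fin 3).succ) = (1:Fin 4) := rfl
lemma s1 : ((1:Fin 3).succ) = (2:Fin 4) := rfl
lemma s2 : ((2:Fin 3).succ) = (3:Fin 4) := rfl

end NCP

/-- the null condition for the quasilinear coefficients
`F^{j,αβγ}` is preserved under differentiation by the ten vector fields
(Lemma 2.2, first part). -/
theorem null_condition_preserved_quasilinear (Nn : ℕ)
    (F : Fin Nn → Fin 4 → Fin 4 → Fin 4 → ℝ) (hF : ∀ j, NullC3 (F j))
    (Z : Op)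
    (hZ : Z ∈ ({px 0, px 1, px 2, Omg 0 1, Omg 0 2, Omg 1 2,
                Lk 0, Lk 1, Lk 2, Sop} : Set Op)) :
    ∃ Ft : Fin Nn → Fin 4 → Fin 4 → Fin 4 → ℝ,
      (∀ j, NullC3 (Ft j)) ∧
      ∀ v w : Fn, ContDiff ℝ (⊤ : ℕ∞) (Function.uncurry v) → ContDiff ℝ (⊤ : ℕ∞) (Function.uncurry w) →
        ∀ j t x,
          Z (fun s y => ∑ α, ∑ β, ∑ γ, F j α β γ * pd γ v s y * pd α (pd β w) s y) t x
          = (∑ α, ∑ β, ∑ γ, F j α β γ * pd γ (Z v) t x * pd α (pd β w) t x)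
            + (∑ α, ∑ β, ∑ γ, F j α β γ * pd γ v t x * pd α (pd β (Z w)) t x)
            + (∑ α, ∑ β, ∑ γ, Ft j α β γ * pd γ v t x * pd α (pd β w) t x) := by
  classical
  simp only [Set.mem_insert_iff, Set.mem_singleton_iff] at hZ
  rcases hZ with h|h|h|h|h|h|h|h|h|h <;> subst h
  · -- px 0
    refine NCP.master_final (fun _ => 0) (Pi.single 1 1) Nn F hF _ ?_ ?_
    · intro u t x hu
      rw [NCP.px_apply u 0 t x hu]
      simp [NCP.ZU, Fin.sum_univ_four, Pi.single_apply, NCP.s0]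
    · intro X hX
      refine ⟨fun _ => X, fun μ => rfl, fun s => hX, fun μ => ?_⟩
      simpa [NCP.BB] using hasDerivAt_const (0:ℝ) (X μ)
  · -- px 1
    refine NCP.master_final (fun _ => 0) (Pi.single 2 1) Nn F hF _ ?_ ?_
    · intro u t x hu
      rw [NCP.px_apply u 1 t x hu]
      simp [NCP.ZU, Fin.sum_univ_four, Pi.single_apply, NCP.s1]
    · intro X hX
      refine ⟨fun _ => X, fun μ => rfl, fun s => hX, fun μ => ?_⟩
      simpa [NCP.BB] using hasDerivAt_const (0:ℝ) (X μ)
  · -- px 2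
    refine NCP.master_final (fun _ => 0) (Pi.single 3 1) Nn F hF _ ?_ ?_
    · intro u t x hu
      rw [NCP.px_apply u 2 t x hu]
      simp [NCP.ZU, Fin.sum_univ_four, Pi.single_apply, NCP.s2]
    · intro X hX
      refine ⟨fun _ => X, fun μ => rfl, fun s => hX, fun μ => ?_⟩
      simpa [NCP.BB] using hasDerivAt_const (0:ℝ) (X μ)
  · -- Omg 0 1
    refine NCP.master_final ![0, -NCP.Cx 1, NCP.Cx 0, 0] (fun _ => 0) Nn F hF _ ?_ ?_
    · intro u t x hu
      show x 0 * px 1 u t x - x 1 * px 0 u t x = _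
      rw [NCP.px_apply u 1 t x hu, NCP.px_apply u 0 t x hu]
      simp [NCP.ZU, Fin.sum_univ_four, NCP.s0, NCP.s1]
      ring
    · intro X hX
      refine ⟨fun s => ![X 0, cos s * X 1 + sin s * X 2, cos s * X 2 - sin s * X 1, X 3],
        ?_, ?_, ?_⟩
      · intro μ; fin_cases μ <;> simp
      · intro s
        simp only [Matrix.cons_val_zero, Matrix.cons_val_one, Matrix.head_cons,
          Matrix.cons_val_two, Matrix.tail_cons, Matrix.cons_val_three]
        linear_combination hX - (X 1 ^ 2 + X 2 ^ 2) * sin_sq_add_cos_sq s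
      · intro μ
        have hv : (∑ ρ, NCP.BB ![0, -NCP.Cx 1, NCP.Cx 0, 0] μ ρ * X ρ)
            = ![0, X 2, -X 1, 0] μ := by
          fin_cases μ <;>
            simp [NCP.BB, Fin.sum_univ_four, NCP.ee0, NCP.ee1, NCP.ee2, NCP.ee3,
              Pi.single_apply]
        rw [hv]
        fin_cases μ <;>
          simp only [Matrix.cons_val_zero, Matrix.cons_val_one, Matrix.head_cons,
            Matrix.cons_val_two, Matrix.tail_cons, Matrix.cons_val_three, Fin.isValue]
        · exact hasDerivAt_const _ _
        · simpa using ((Real.hasDerivAt_cos 0).mul_const (X 1)).fun_add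
            ((Real.hasDerivAt_sin 0).mul_const (X 2))
        · simpa using ((Real.hasDerivAt_cos 0).mul_const (X 2)).fun_sub
            ((Real.hasDerivAt_sin 0).mul_const (X 1))
        · exact hasDerivAt_const _ _
  · -- Omg 0 2
    refine NCP.master_final ![0, -NCP.Cx 2, 0, NCP.Cx 0] (fun _ => 0) Nn F hF _ ?_ ?_
    · intro u t x hu
      show x 0 * px 2 u t x - x 2 * px 0 u t x = _
      rw [NCP.px_apply u 2 t x hu, NCP.px_apply u 0 t x hu]
      simp [NCP.ZU, Fin.sum_univ_four, NCP.s0, NCP.s2]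
      ring
    · intro X hX
      refine ⟨fun s => ![X 0, cos s * X 1 + sin s * X 3, X 2, cos s * X 3 - sin s * X 1],
        ?_, ?_, ?_⟩
      · intro μ; fin_cases μ <;> simp
      · intro s
        simp only [Matrix.cons_val_zero, Matrix.cons_val_one, Matrix.head_cons,
          Matrix.cons_val_two, Matrix.tail_cons, Matrix.cons_val_three]
        linear_combination hX - (X 1 ^ 2 + X 3 ^ 2) * sin_sq_add_cos_sq s
      · intro μ
        have hv : (∑ ρ, NCP.BB ![0, -NCP.Cx 2, 0, NCP.Cx 0] μ ρ * X ρ)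
            = ![0, X 3, 0, -X 1] μ := by
          fin_cases μ <;>
            simp [NCP.BB, Fin.sum_univ_four, NCP.ee0, NCP.ee1, NCP.ee2, NCP.ee3,
              Pi.single_apply]
        rw [hv]
        fin_cases μ <;>
          simp only [Matrix.cons_val_zero, Matrix.cons_val_one, Matrix.head_cons,
            Matrix.cons_val_two, Matrix.tail_cons, Matrix.cons_val_three, Fin.isValue]
        · exact hasDerivAt_const _ _
        · simpa using ((Real.hasDerivAt_cos 0).mul_const (X 1)).fun_add
            ((Real.hasDerivAt_sin 0).mul_const (X 3))
        · exact hasDerivAt_const _ _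
        · simpa using ((Real.hasDerivAt_cos 0).mul_const (X 3)).fun_sub
            ((Real.hasDerivAt_sin 0).mul_const (X 1))
  · -- Omg 1 2
    refine NCP.master_final ![0, 0, -NCP.Cx 2, NCP.Cx 1] (fun _ => 0) Nn F hF _ ?_ ?_
    · intro u t x hu
      show x 1 * px 2 u t x - x 2 * px 1 u t x = _
      rw [NCP.px_apply u 2 t x hu, NCP.px_apply u 1 t x hu]
      simp [NCP.ZU, Fin.sum_univ_four, NCP.s1, NCP.s2]
      ring
    · intro X hX
      refine ⟨fun s => ![X 0, X 1, cos s * X 2 + sin s * X 3, cos s * X 3 - sin s * X 2],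
        ?_, ?_, ?_⟩
      · intro μ; fin_cases μ <;> simp
      · intro s
        simp only [Matrix.cons_val_zero, Matrix.cons_val_one, Matrix.head_cons,
          Matrix.cons_val_two, Matrix.tail_cons, Matrix.cons_val_three]
        linear_combination hX - (X 2 ^ 2 + X 3 ^ 2) * sin_sq_add_cos_sq s
      · intro μ
        have hv : (∑ ρ, NCP.BB ![0, 0, -NCP.Cx 2, NCP.Cx 1] μ ρ * X ρ)
            = ![0, 0, X 3, -X 2] μ := by
          fin_cases μ <;>
            simp [NCP.BB, Fin.sum_univ_four, NCP.ee0, NCP.ee1, NCP.ee2, NCP.ee3,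
              Pi.single_apply]
        rw [hv]
        fin_cases μ <;>
          simp only [Matrix.cons_val_zero, Matrix.cons_val_one, Matrix.head_cons,
            Matrix.cons_val_two, Matrix.tail_cons, Matrix.cons_val_three, Fin.isValue]
        · exact hasDerivAt_const _ _
        · exact hasDerivAt_const _ _
        · simpa using ((Real.hasDerivAt_cos 0).mul_const (X 2)).fun_add
            ((Real.hasDerivAt_sin 0).mul_const (X 3))
        · simpa using ((Real.hasDerivAt_cos 0).mul_const (X 3)).fun_sub
            ((Real.hasDerivAt_sin 0).mul_const (X 2))
  · -- Lk 0
    refine NCP.master_final ![NCP.Cx 0, NCP.Ct, 0, 0] (fun _ => 0) Nn F hF _ ?_ ?_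
    · intro u t x hu
      show x 0 * pt u t x + t * px 0 u t x = _
      rw [NCP.pt_apply u t x hu, NCP.px_apply u 0 t x hu]
      simp [NCP.ZU, Fin.sum_univ_four, NCP.s0]
    · intro X hX
      refine ⟨fun s => ![Real.cosh s * X 0 + Real.sinh s * X 1,
        Real.cosh s * X 1 + Real.sinh s * X 0, X 2, X 3], ?_, ?_, ?_⟩
      · intro μ; fin_cases μ <;> simp
      · intro s
        simp only [Matrix.cons_val_zero, Matrix.cons_val_one, Matrix.head_cons,
          Matrix.cons_val_two, Matrix.tail_cons, Matrix.cons_val_three]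
        linear_combination hX + (X 0 ^ 2 - X 1 ^ 2) * Real.cosh_sq_sub_sinh_sq s
      · intro μ
        have hv : (∑ ρ, NCP.BB ![NCP.Cx 0, NCP.Ct, 0, 0] μ ρ * X ρ)
            = ![X 1, X 0, 0, 0] μ := by
          fin_cases μ <;>
            simp [NCP.BB, Fin.sum_univ_four, NCP.ee0, NCP.ee1, NCP.ee2, NCP.ee3,
              Pi.single_apply]
        rw [hv]
        fin_cases μ <;>
          simp only [Matrix.cons_val_zero, Matrix.cons_val_one, Matrix.head_cons,
            Matrix.cons_val_two, Matrix.tail_cons, Matrix.cons_val_three, Fin.isValue]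
        · simpa using ((Real.hasDerivAt_cosh 0).mul_const (X 0)).fun_add
            ((Real.hasDerivAt_sinh 0).mul_const (X 1))
        · simpa using ((Real.hasDerivAt_cosh 0).mul_const (X 1)).fun_add
            ((Real.hasDerivAt_sinh 0).mul_const (X 0))
        · exact hasDerivAt_const _ _
        · exact hasDerivAt_const _ _
  · -- Lk 1
    refine NCP.master_final ![NCP.Cx 1, 0, NCP.Ct, 0] (fun _ => 0) Nn F hF _ ?_ ?_
    · intro u t x hu
      show x 1 * pt u t x + t * px 1 u t x = _
      rw [NCP.pt_apply u t x hu, NCP.px_apply u 1 t x hu]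
      simp [NCP.ZU, Fin.sum_univ_four, NCP.s1]
    · intro X hX
      refine ⟨fun s => ![Real.cosh s * X 0 + Real.sinh s * X 2, X 1,
        Real.cosh s * X 2 + Real.sinh s * X 0, X 3], ?_, ?_, ?_⟩
      · intro μ; fin_cases μ <;> simp
      · intro s
        simp only [Matrix.cons_val_zero, Matrix.cons_val_one, Matrix.head_cons,
          Matrix.cons_val_two, Matrix.tail_cons, Matrix.cons_val_three]
        linear_combination hX + (X 0 ^ 2 - X 2 ^ 2) * Real.cosh_sq_sub_sinh_sq s
      · intro μ
        have hv : (∑ ρ, NCP.BB ![NCP.Cx 1, 0, NCP.Ct, 0] μ ρ * X ρ)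
            = ![X 2, 0, X 0, 0] μ := by
          fin_cases μ <;>
            simp [NCP.BB, Fin.sum_univ_four, NCP.ee0, NCP.ee1, NCP.ee2, NCP.ee3,
              Pi.single_apply]
        rw [hv]
        fin_cases μ <;>
          simp only [Matrix.cons_val_zero, Matrix.cons_val_one, Matrix.head_cons,
            Matrix.cons_val_two, Matrix.tail_cons, Matrix.cons_val_three, Fin.isValue]
        · simpa using ((Real.hasDerivAt_cosh 0).mul_const (X 0)).fun_add
            ((Real.hasDerivAt_sinh 0).mul_const (X 2))
        · exact hasDerivAt_const _ _
        · simpa using ((Real.hasDerivAt_cosh 0).mul_const (X 2)).fun_add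
            ((Real.hasDerivAt_sinh 0).mul_const (X 0))
        · exact hasDerivAt_const _ _
  · -- Lk 2
    refine NCP.master_final ![NCP.Cx 2, 0, 0, NCP.Ct] (fun _ => 0) Nn F hF _ ?_ ?_
    · intro u t x hu
      show x 2 * pt u t x + t * px 2 u t x = _
      rw [NCP.pt_apply u t x hu, NCP.px_apply u 2 t x hu]
      simp [NCP.ZU, Fin.sum_univ_four, NCP.s2]
    · intro X hX
      refine ⟨fun s => ![Real.cosh s * X 0 + Real.sinh s * X 3, X 1, X 2,
        Real.cosh s * X 3 + Real.sinh s * X 0], ?_, ?_, ?_⟩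
      · intro μ; fin_cases μ <;> simp
      · intro s
        simp only [Matrix.cons_val_zero, Matrix.cons_val_one, Matrix.head_cons,
          Matrix.cons_val_two, Matrix.tail_cons, Matrix.cons_val_three]
        linear_combination hX + (X 0 ^ 2 - X 3 ^ 2) * Real.cosh_sq_sub_sinh_sq s
      · intro μ
        have hv : (∑ ρ, NCP.BB ![NCP.Cx 2, 0, 0, NCP.Ct] μ ρ * X ρ)
            = ![X 3, 0, 0, X 0] μ := by
          fin_cases μ <;>
            simp [NCP.BB, Fin.sum_univ_four, NCP.ee0, NCP.ee1, NCP.ee2, NCP.ee3,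
              Pi.single_apply]
        rw [hv]
        fin_cases μ <;>
          simp only [Matrix.cons_val_zero, Matrix.cons_val_one, Matrix.head_cons,
            Matrix.cons_val_two, Matrix.tail_cons, Matrix.cons_val_three, Fin.isValue]
        · simpa using ((Real.hasDerivAt_cosh 0).mul_const (X 0)).fun_add
            ((Real.hasDerivAt_sinh 0).mul_const (X 3))
        · exact hasDerivAt_const _ _
        · exact hasDerivAt_const _ _
        · simpa using ((Real.hasDerivAt_cosh 0).mul_const (X 3)).fun_add
            ((Real.hasDerivAt_sinh 0).mul_const (X 0))
  · -- Sop
    refine NCP.master_final ![NCP.Ct, NCP.Cx 0, NCP.Cx 1, NCP.Cx 2] (fun _ => 0) Nn F hF _ ?_ ?_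
    · intro u t x hu
      show t * pt u t x + (∑ i, x i * px i u t x) = _
      rw [Fin.sum_univ_three, NCP.pt_apply u t x hu, NCP.px_apply u 0 t x hu,
        NCP.px_apply u 1 t x hu, NCP.px_apply u 2 t x hu]
      simp [NCP.ZU, Fin.sum_univ_four, NCP.s0, NCP.s1, NCP.s2]
      ring
    · intro X hX
      refine ⟨fun s μ => Real.exp s * X μ, ?_, ?_, ?_⟩
      · intro μ; simp
      · intro s
        linear_combination (Real.exp s) ^ 2 * hX
      · intro μ
        have hv : (∑ ρ, NCP.BB ![NCP.Ct, NCP.Cx 0, NCP.Cx 1, NCP.Cx 2] μ ρ * X ρ) = X μ := by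
          fin_cases μ <;>
            simp [NCP.BB, Fin.sum_univ_four, NCP.ee0, NCP.ee1, NCP.ee2, NCP.ee3,
              Pi.single_apply]
        rw [hv]
        simpa using (Real.hasDerivAt_exp 0).mul_const (X μ)

end
end

section
/- Let (F^{jk,αβ})_{j,k=1,…,N; α,β=0,…,3} be real constants such that for each pair j,k, F^{jk,αβ}X_αX_β = 0 (summed over α,β) for every X∈ℝ⁴ with X_0²=X_1²+X_2²+X_3². Then for each of the ten vector fields Z ∈ {∂_1,∂_2,∂_3,Ω_{12},Ω_{13},Ω_{23},L_1,L_2,L_3,S} there exist real constants (F̃^{jk,αβ}) also satisfying F̃^{jk,αβ}X_αX_β = 0 for every null X, such that for all smooth functions v,w on ℝ×ℝ³ and each j,k: Z( F^{jk,αβ}(∂_α v)(∂_β w) ) = F^{jk,αβ}(∂_α Zv)(∂_β w) + F^{jk,αβ}(∂_α v)(∂_β Zw) + F̃^{jk,αβ}(∂_α v)(∂_β w), with summation over repeated Greek indices 0,…,3 and ∂_0=∂_t. -/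
open MeasureTheory Real

noncomputable section

variable {N : ℕ}

set_option linter.unreachableTactic false
set_option linter.unusedTactic false
set_option linter.unnecessarySeqFocus false

def Evec : Fin 4 → ℝ × (Fin 3 → ℝ) := Fin.cons (1, 0) fun a => (0, Pi.single a 1)

theorem pd_eq (v : Fn) (hv : Differentiable ℝ (Function.uncurry v)) (α : Fin 4) (t : ℝ)
    (x : Fin 3 → ℝ) : pd α v t x = fderiv ℝ (Function.uncurry v) (t, x) (Evec α) := by
  induction α using Fin.cases with
  | zero =>
      show pt v t x = _
      have h1 : HasDerivAt (fun s : ℝ => (s, x)) ((1 : ℝ), (0 : Fin 3 → ℝ)) t :=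
        (hasDerivAt_id t).prodMk (hasDerivAt_const t x)
      have h2 := ((hv (t, x)).hasFDerivAt).comp_hasDerivAt t h1
      exact h2.deriv
  | succ a =>
      show px a v t x = _
      have h1 : HasFDerivAt (fun y : Fin 3 → ℝ => (t, y))
          ((ContinuousLinearMap.inr ℝ ℝ (Fin 3 → ℝ))) x := by
        exact (hasFDerivAt_const t x).prodMk (hasFDerivAt_id x)
      have h2 := ((hv (t, x)).hasFDerivAt).comp x h1
      have := h2.fderiv
      show fderiv ℝ (fun y => v t y) x (Pi.single a 1) = _
      rw [show (fun y => v t y) = (Function.uncurry v ∘ fun y : Fin 3 → ℝ => (t, y)) from rfl, this]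
      rfl

theorem uncurry_pd_eq (v : Fn) (hv : ContDiff ℝ (⊤ : ℕ∞) (Function.uncurry v)) (α : Fin 4) :
    Function.uncurry (pd α v) = fun p => fderiv ℝ (Function.uncurry v) p (Evec α) := by
  funext p
  exact pd_eq v (hv.differentiable (by simp)) α p.1 p.2

theorem contDiff_pd (v : Fn) (hv : ContDiff ℝ (⊤ : ℕ∞) (Function.uncurry v)) (α : Fin 4) :
    ContDiff ℝ (⊤ : ℕ∞) (Function.uncurry (pd α v)) := by
  rw [uncurry_pd_eq v hv α]
  exact (hv.fderiv_right (by simp)).clm_apply contDiff_const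

theorem pd_comm (v : Fn) (hv : ContDiff ℝ (⊤ : ℕ∞) (Function.uncurry v)) (α β : Fin 4) (t : ℝ)
    (x : Fin 3 → ℝ) : pd α (pd β v) t x = pd β (pd α v) t x := by
  have hd : Differentiable ℝ (fderiv ℝ (Function.uncurry v)) :=
    (hv.fderiv_right (m := 1) (WithTop.coe_le_coe.mpr le_top)).differentiable (by simp)
  have hsym := second_derivative_symmetric
    (f := Function.uncurry v) (f' := fderiv ℝ (Function.uncurry v))
    (f'' := fderiv ℝ (fderiv ℝ (Function.uncurry v)) (t, x))
    (fun y => ((hv.differentiable (by simp)) y).hasFDerivAt)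
    ((hd (t, x)).hasFDerivAt)
  have key : ∀ γ δ : Fin 4, pd γ (pd δ v) t x
      = fderiv ℝ (fderiv ℝ (Function.uncurry v)) (t, x) (Evec γ) (Evec δ) := by
    intro γ δ
    rw [pd_eq (pd δ v) ((contDiff_pd v hv δ).differentiable (by simp)) γ t x,
      uncurry_pd_eq v hv δ]
    rw [fderiv_clm_apply (hd (t, x)) (differentiableAt_const _)]
    simp
  rw [key α β, key β α, hsym]

theorem pd_mul (f g : Fn) (hf : Differentiable ℝ (Function.uncurry f))
    (hg : Differentiable ℝ (Function.uncurry g)) (α : Fin 4) (t : ℝ) (x : Fin 3 → ℝ) :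
    pd α (fun s y => f s y * g s y) t x = pd α f t x * g t x + f t x * pd α g t x := by
  have h : Differentiable ℝ (Function.uncurry fun s y => f s y * g s y) := by
    exact (hf.mul hg : Differentiable ℝ fun p => Function.uncurry f p * Function.uncurry g p)
  rw [pd_eq _ h α t x]
  have : Function.uncurry (fun s y => f s y * g s y)
      = fun p => Function.uncurry f p * Function.uncurry g p := rfl
  rw [this, fderiv_fun_mul (hf (t, x)) (hg (t, x))]
  simp only [ContinuousLinearMap.add_apply, ContinuousLinearMap.smul_apply, smul_eq_mul]
  rw [pd_eq f hf α t x, pd_eq g hg α t x]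
  simp only [Function.uncurry_apply_pair]
  ring

theorem pd_sum {ι : Type*} (s : Finset ι) (f : ι → Fn)
    (hf : ∀ i ∈ s, Differentiable ℝ (Function.uncurry (f i))) (α : Fin 4) (t : ℝ)
    (x : Fin 3 → ℝ) :
    pd α (fun s' y => ∑ i ∈ s, f i s' y) t x = ∑ i ∈ s, pd α (f i) t x := by
  have h : Differentiable ℝ (Function.uncurry fun s' y => ∑ i ∈ s, f i s' y) := by
    have : (Function.uncurry fun s' y => ∑ i ∈ s, f i s' y)
        = fun p => ∑ i ∈ s, Function.uncurry (f i) p := rfl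
    rw [this]
    exact Differentiable.fun_sum fun i hi => hf i hi
  rw [pd_eq _ h α t x]
  have : Function.uncurry (fun s' y => ∑ i ∈ s, f i s' y)
      = fun p => ∑ i ∈ s, Function.uncurry (f i) p := rfl
  rw [this, fderiv_fun_sum fun i hi => (hf i hi) (t, x)]
  rw [ContinuousLinearMap.sum_apply]
  exact Finset.sum_congr rfl fun i hi => (pd_eq (f i) (hf i hi) α t x).symm

def tfun : Fn := fun s _ => s
def cofun (i : Fin 3) : Fn := fun _ y => y i
def zfun : Fn := fun _ _ => 0

theorem contDiff_tfun : ContDiff ℝ (⊤ : ℕ∞) (Function.uncurry tfun) := contDiff_fst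
theorem contDiff_cofun (i : Fin 3) : ContDiff ℝ (⊤ : ℕ∞) (Function.uncurry (cofun i)) :=
  (ContinuousLinearMap.contDiff ((ContinuousLinearMap.proj i).comp
    (ContinuousLinearMap.snd ℝ ℝ (Fin 3 → ℝ))) : )
theorem contDiff_zfun : ContDiff ℝ (⊤ : ℕ∞) (Function.uncurry zfun) := contDiff_const

theorem pd_tfun (α : Fin 4) (t : ℝ) (x : Fin 3 → ℝ) : pd α tfun t x = (Evec α).1 := by
  rw [pd_eq tfun (contDiff_tfun.differentiable (by simp)) α t x]
  have : Function.uncurry tfun = fun p : ℝ × (Fin 3 → ℝ) => (ContinuousLinearMap.fst ℝ ℝ (Fin 3 → ℝ)) p := rfl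
  rw [this, ContinuousLinearMap.fderiv]
  rfl

theorem pd_cofun (i : Fin 3) (α : Fin 4) (t : ℝ) (x : Fin 3 → ℝ) :
    pd α (cofun i) t x = (Evec α).2 i := by
  rw [pd_eq (cofun i) ((contDiff_cofun i).differentiable (by simp)) α t x]
  have : Function.uncurry (cofun i) = fun p : ℝ × (Fin 3 → ℝ) =>
      ((ContinuousLinearMap.proj i).comp (ContinuousLinearMap.snd ℝ ℝ (Fin 3 → ℝ))) p := rfl
  rw [this, ContinuousLinearMap.fderiv]
  rfl

theorem pd_zfun (α : Fin 4) (t : ℝ) (x : Fin 3 → ℝ) : pd α zfun t x = 0 := by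
  rw [pd_eq zfun (contDiff_zfun.differentiable (by simp)) α t x]
  have : Function.uncurry zfun = fun _ : ℝ × (Fin 3 → ℝ) => (0:ℝ) := rfl
  rw [this, fderiv_fun_const]
  rfl

theorem pd_negfun (f : Fn) (hf : ContDiff ℝ (⊤ : ℕ∞) (Function.uncurry f)) (α : Fin 4) (t : ℝ)
    (x : Fin 3 → ℝ) : pd α (fun s y => -(f s y)) t x = -(pd α f t x) := by
  have hneg : Differentiable ℝ (Function.uncurry fun s y => -(f s y)) :=
    ((hf.differentiable (by simp)).neg : Differentiable ℝ fun p => -(Function.uncurry f p))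
  rw [pd_eq _ hneg α t x,
    pd_eq f (hf.differentiable (by simp)) α t x]
  have : Function.uncurry (fun s y => -(f s y)) = fun p => -(Function.uncurry f p) := rfl
  rw [this, fderiv_fun_neg]
  rfl

theorem pd_constfun (c : ℝ) (α : Fin 4) (t : ℝ) (x : Fin 3 → ℝ) :
    pd α (fun _ _ => c) t x = 0 := by
  have h : Differentiable ℝ (Function.uncurry fun _ _ => (c:ℝ)) :=
    (differentiable_const c : Differentiable ℝ fun _ : ℝ × (Fin 3 → ℝ) => c)
  rw [pd_eq _ h α t x]
  have : Function.uncurry (fun _ _ => (c:ℝ)) = fun _ : ℝ × (Fin 3 → ℝ) => c := rfl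
  rw [this, fderiv_fun_const]
  rfl

theorem pd_const_mul (c : ℝ) (f : Fn) (hf : Differentiable ℝ (Function.uncurry f))
    (α : Fin 4) (t : ℝ) (x : Fin 3 → ℝ) :
    pd α (fun s y => c * f s y) t x = c * pd α f t x := by
  have := pd_mul (fun _ _ => c) f
    ((differentiable_const c : Differentiable ℝ fun _ : ℝ × (Fin 3 → ℝ) => c)) hf α t x
  rw [this, pd_constfun]
  ring

-- differentiability of the big quadratic expression pieces
theorem UD_term (G : ℝ) (v w : Fn) (hv : ContDiff ℝ (⊤ : ℕ∞) (Function.uncurry v))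
    (hw : ContDiff ℝ (⊤ : ℕ∞) (Function.uncurry w)) (α β : Fin 4) :
    Differentiable ℝ (Function.uncurry fun s y => G * pd α v s y * pd β w s y) := by
  have h1 := (contDiff_pd v hv α).differentiable (by simp)
  have h2 := (contDiff_pd w hw β).differentiable (by simp)
  exact (((differentiable_const G).mul h1).mul h2 :
    Differentiable ℝ fun p => G * Function.uncurry (pd α v) p * Function.uncurry (pd β w) p)

theorem pd_quad (G : Fin 4 → Fin 4 → ℝ) (v w : Fn)
    (hv : ContDiff ℝ (⊤ : ℕ∞) (Function.uncurry v)) (hw : ContDiff ℝ (⊤ : ℕ∞) (Function.uncurry w))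
    (μ : Fin 4) (t : ℝ) (x : Fin 3 → ℝ) :
    pd μ (fun s y => ∑ α, ∑ β, G α β * pd α v s y * pd β w s y) t x
    = ∑ α, ∑ β, G α β * (pd μ (pd α v) t x * pd β w t x
        + pd α v t x * pd μ (pd β w) t x) := by
  have hin : ∀ α : Fin 4, Differentiable ℝ
      (Function.uncurry fun s y => ∑ β, G α β * pd α v s y * pd β w s y) := by
    intro α
    have : (Function.uncurry fun s y => ∑ β, G α β * pd α v s y * pd β w s y)
        = fun p => ∑ β, Function.uncurry (fun s y => G α β * pd α v s y * pd β w s y) p := rfl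
    rw [this]
    exact Differentiable.fun_sum fun β _ => UD_term (G α β) v w hv hw α β
  rw [pd_sum Finset.univ _ (fun α _ => hin α) μ t x]
  refine Finset.sum_congr rfl fun α _ => ?_
  rw [pd_sum Finset.univ _ (fun β _ => UD_term (G α β) v w hv hw α β) μ t x]
  refine Finset.sum_congr rfl fun β _ => ?_
  have hva := (contDiff_pd v hv α).differentiable (by simp)
  have hwb := (contDiff_pd w hw β).differentiable (by simp)
  have hmul : Differentiable ℝ (Function.uncurry fun s y => pd α v s y * pd β w s y) :=
    (hva.mul hwb : Differentiable ℝ fun p =>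
      Function.uncurry (pd α v) p * Function.uncurry (pd β w) p)
  have h1 : (fun s y => G α β * pd α v s y * pd β w s y)
      = fun s y => G α β * (pd α v s y * pd β w s y) := by funext s y; ring
  rw [h1, pd_const_mul _ _ hmul, pd_mul _ _ hva hwb]

theorem pd_Zv (e : Fin 4 → Fn) (c : Fin 4 → Fin 4 → ℝ)
    (he : ∀ μ, ContDiff ℝ (⊤ : ℕ∞) (Function.uncurry (e μ)))
    (hce : ∀ α μ t x, pd α (e μ) t x = c α μ)
    (v : Fn) (hv : ContDiff ℝ (⊤ : ℕ∞) (Function.uncurry v)) (α : Fin 4) (t : ℝ) (x : Fin 3 → ℝ) :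
    pd α (fun s y => ∑ μ, e μ s y * pd μ v s y) t x
    = (∑ μ, c α μ * pd μ v t x) + ∑ μ, e μ t x * pd μ (pd α v) t x := by
  have hterm : ∀ μ : Fin 4, Differentiable ℝ
      (Function.uncurry fun s y => e μ s y * pd μ v s y) := by
    intro μ
    exact (((he μ).differentiable (by simp)).mul ((contDiff_pd v hv μ).differentiable (by simp)) :
      Differentiable ℝ fun p => Function.uncurry (e μ) p * Function.uncurry (pd μ v) p)
  rw [pd_sum Finset.univ _ (fun μ _ => hterm μ) α t x]
  rw [← Finset.sum_add_distrib]
  refine Finset.sum_congr rfl fun μ _ => ?_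
  rw [pd_mul _ _ (((he μ).differentiable (by simp))) ((contDiff_pd v hv μ).differentiable (by simp))
    α t x, hce α μ t x, pd_comm v hv α μ t x]

theorem key (Z : Op) (e : Fin 4 → Fn) (c : Fin 4 → Fin 4 → ℝ)
    (he : ∀ μ, ContDiff ℝ (⊤ : ℕ∞) (Function.uncurry (e μ)))
    (hce : ∀ α μ t x, pd α (e μ) t x = c α μ)
    (hZd : ∀ g : Fn, ∀ t x, Z g t x = ∑ μ, e μ t x * pd μ g t x)
    (G : Fin 4 → Fin 4 → ℝ) (v w : Fn)
    (hv : ContDiff ℝ (⊤ : ℕ∞) (Function.uncurry v)) (hw : ContDiff ℝ (⊤ : ℕ∞) (Function.uncurry w))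
    (t : ℝ) (x : Fin 3 → ℝ) :
    Z (fun s y => ∑ α, ∑ β, G α β * pd α v s y * pd β w s y) t x
    = (∑ α, ∑ β, G α β * pd α (Z v) t x * pd β w t x)
      + (∑ α, ∑ β, G α β * pd α v t x * pd β (Z w) t x)
      + (∑ α, ∑ β, (-(∑ μ, (c μ α * G μ β + c μ β * G α μ))) * pd α v t x * pd β w t x) := by
  have hZv : Z v = fun s y => ∑ μ, e μ s y * pd μ v s y := by
    funext s y; exact hZd v s y
  have hZw : Z w = fun s y => ∑ μ, e μ s y * pd μ w s y := by
    funext s y; exact hZd w s y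
  rw [hZd _ t x]
  have hexp : ∀ μ : Fin 4, pd μ (fun s y => ∑ α, ∑ β, G α β * pd α v s y * pd β w s y) t x
      = ∑ α, ∑ β, G α β * (pd μ (pd α v) t x * pd β w t x + pd α v t x * pd μ (pd β w) t x) :=
    fun μ => pd_quad G v w hv hw μ t x
  simp only [hexp]
  have hv' : ∀ α : Fin 4, pd α (Z v) t x
      = (∑ μ, c α μ * pd μ v t x) + ∑ μ, e μ t x * pd μ (pd α v) t x := by
    intro α; rw [hZv]; exact pd_Zv e c he hce v hv α t x
  have hw' : ∀ α : Fin 4, pd α (Z w) t x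
      = (∑ μ, c α μ * pd μ w t x) + ∑ μ, e μ t x * pd μ (pd α w) t x := by
    intro α; rw [hZw]; exact pd_Zv e c he hce w hw α t x
  simp only [hv', hw']
  simp only [Fin.sum_univ_four]
  ring

theorem R_of_null (F : Fin 4 → Fin 4 → ℝ) (hF : NullC2 F) :
    F 0 0 + F 1 1 = 0 ∧ F 0 0 + F 2 2 = 0 ∧ F 0 0 + F 3 3 = 0 ∧
    F 0 1 + F 1 0 = 0 ∧ F 0 2 + F 2 0 = 0 ∧ F 0 3 + F 3 0 = 0 ∧
    F 1 2 + F 2 1 = 0 ∧ F 1 3 + F 3 1 = 0 ∧ F 2 3 + F 3 2 = 0 := by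
  have hA := hF ![1,1,0,0] (by norm_num [Matrix.cons_val_two, Matrix.cons_val_three, Matrix.tail_cons, Matrix.head_cons])
  have hB := hF ![1,-1,0,0] (by norm_num [Matrix.cons_val_two, Matrix.cons_val_three, Matrix.tail_cons, Matrix.head_cons])
  have hC := hF ![1,0,1,0] (by norm_num [Matrix.cons_val_two, Matrix.cons_val_three, Matrix.tail_cons, Matrix.head_cons])
  have hD := hF ![1,0,-1,0] (by norm_num [Matrix.cons_val_two, Matrix.cons_val_three, Matrix.tail_cons, Matrix.head_cons])
  have hE := hF ![1,0,0,1] (by norm_num [Matrix.cons_val_two, Matrix.cons_val_three, Matrix.tail_cons, Matrix.head_cons])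
  have hG := hF ![1,0,0,-1] (by norm_num [Matrix.cons_val_two, Matrix.cons_val_three, Matrix.tail_cons, Matrix.head_cons])
  have hH := hF ![5,3,4,0] (by norm_num [Matrix.cons_val_two, Matrix.cons_val_three, Matrix.tail_cons, Matrix.head_cons])
  have hI := hF ![5,3,0,4] (by norm_num [Matrix.cons_val_two, Matrix.cons_val_three, Matrix.tail_cons, Matrix.head_cons])
  have hJ := hF ![5,0,3,4] (by norm_num [Matrix.cons_val_two, Matrix.cons_val_three, Matrix.tail_cons, Matrix.head_cons])
  simp only [Fin.sum_univ_four, Matrix.cons_val_zero, Matrix.cons_val_one, Matrix.head_cons,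
    Matrix.cons_val_two, Matrix.tail_cons, Matrix.cons_val_three] at hA hB hC hD hE hG hH hI hJ
  refine ⟨by linarith, by linarith, by linarith, by linarith, by linarith, by linarith,
    by linarith, by linarith, by linarith⟩

theorem null_of_c (F : Fin 4 → Fin 4 → ℝ) (hF : NullC2 F) (c : Fin 4 → Fin 4 → ℝ)
    (hc : ∀ X : Fin 4 → ℝ,
      X 0 * (c 0 0 * X 0 + c 0 1 * X 1 + c 0 2 * X 2 + c 0 3 * X 3)
      - X 1 * (c 1 0 * X 0 + c 1 1 * X 1 + c 1 2 * X 2 + c 1 3 * X 3)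
      - X 2 * (c 2 0 * X 0 + c 2 1 * X 1 + c 2 2 * X 2 + c 2 3 * X 3)
      - X 3 * (c 3 0 * X 0 + c 3 1 * X 1 + c 3 2 * X 2 + c 3 3 * X 3)
      = c 0 0 * (X 0 ^ 2 - X 1 ^ 2 - X 2 ^ 2 - X 3 ^ 2)) :
    NullC2 (fun α β => -(∑ μ, (c μ α * F μ β + c μ β * F α μ))) := by
  obtain ⟨e1,e2,e3,f01,f02,f03,f12,f13,f23⟩ := R_of_null F hF
  intro X hX
  simp only [Fin.sum_univ_four]
  linear_combination (-2*F 0 0) * hc X + (-2*F 0 0*c 0 0) * hX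
    + (-2*X 1*(c 1 0*X 0 + c 1 1*X 1 + c 1 2*X 2 + c 1 3*X 3))*e1
    + (-2*X 2*(c 2 0*X 0 + c 2 1*X 1 + c 2 2*X 2 + c 2 3*X 3))*e2
    + (-2*X 3*(c 3 0*X 0 + c 3 1*X 1 + c 3 2*X 2 + c 3 3*X 3))*e3
    + (-(X 0*(c 1 0*X 0 + c 1 1*X 1 + c 1 2*X 2 + c 1 3*X 3)
        + X 1*(c 0 0*X 0 + c 0 1*X 1 + c 0 2*X 2 + c 0 3*X 3)))*f01
    + (-(X 0*(c 2 0*X 0 + c 2 1*X 1 + c 2 2*X 2 + c 2 3*X 3)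
        + X 2*(c 0 0*X 0 + c 0 1*X 1 + c 0 2*X 2 + c 0 3*X 3)))*f02
    + (-(X 0*(c 3 0*X 0 + c 3 1*X 1 + c 3 2*X 2 + c 3 3*X 3)
        + X 3*(c 0 0*X 0 + c 0 1*X 1 + c 0 2*X 2 + c 0 3*X 3)))*f03
    + (-(X 1*(c 2 0*X 0 + c 2 1*X 1 + c 2 2*X 2 + c 2 3*X 3)
        + X 2*(c 1 0*X 0 + c 1 1*X 1 + c 1 2*X 2 + c 1 3*X 3)))*f12
    + (-(X 1*(c 3 0*X 0 + c 3 1*X 1 + c 3 2*X 2 + c 3 3*X 3)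
        + X 3*(c 1 0*X 0 + c 1 1*X 1 + c 1 2*X 2 + c 1 3*X 3)))*f13
    + (-(X 2*(c 3 0*X 0 + c 3 1*X 1 + c 3 2*X 2 + c 3 3*X 3)
        + X 3*(c 2 0*X 0 + c 2 1*X 1 + c 2 2*X 2 + c 2 3*X 3)))*f23

def onefun : Fn := fun _ _ => 1
def negcofun (i : Fin 3) : Fn := fun _ y => -(y i)

theorem contDiff_onefun : ContDiff ℝ (⊤ : ℕ∞) (Function.uncurry onefun) := contDiff_const
theorem contDiff_negcofun (i : Fin 3) : ContDiff ℝ (⊤ : ℕ∞) (Function.uncurry (negcofun i)) :=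
  ((contDiff_cofun i).neg : ContDiff ℝ (⊤ : ℕ∞) fun p => -(Function.uncurry (cofun i) p))

theorem pd_onefun (α : Fin 4) (t : ℝ) (x : Fin 3 → ℝ) : pd α onefun t x = 0 :=
  pd_constfun 1 α t x

theorem pd_negcofun (i : Fin 3) (α : Fin 4) (t : ℝ) (x : Fin 3 → ℝ) :
    pd α (negcofun i) t x = -((Evec α).2 i) := by
  have := pd_negfun (cofun i) (contDiff_cofun i) α t x
  rw [show negcofun i = (fun s y => -(cofun i s y)) from rfl, this, pd_cofun]

theorem build (Nn : ℕ) (F : Fin Nn → Fin Nn → Fin 4 → Fin 4 → ℝ)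
    (hF : ∀ j k, NullC2 (F j k)) (Z : Op) (e : Fin 4 → Fn) (c : Fin 4 → Fin 4 → ℝ)
    (he : ∀ μ, ContDiff ℝ (⊤ : ℕ∞) (Function.uncurry (e μ)))
    (hce : ∀ α μ t x, pd α (e μ) t x = c α μ)
    (hZd : ∀ g : Fn, ∀ t x, Z g t x = ∑ μ, e μ t x * pd μ g t x)
    (hc : ∀ X : Fin 4 → ℝ,
      X 0 * (c 0 0 * X 0 + c 0 1 * X 1 + c 0 2 * X 2 + c 0 3 * X 3)
      - X 1 * (c 1 0 * X 0 + c 1 1 * X 1 + c 1 2 * X 2 + c 1 3 * X 3)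
      - X 2 * (c 2 0 * X 0 + c 2 1 * X 1 + c 2 2 * X 2 + c 2 3 * X 3)
      - X 3 * (c 3 0 * X 0 + c 3 1 * X 1 + c 3 2 * X 2 + c 3 3 * X 3)
      = c 0 0 * (X 0 ^ 2 - X 1 ^ 2 - X 2 ^ 2 - X 3 ^ 2)) :
    ∃ Ft : Fin Nn → Fin Nn → Fin 4 → Fin 4 → ℝ,
      (∀ j k, NullC2 (Ft j k)) ∧
      ∀ v w : Fn, ContDiff ℝ (⊤ : ℕ∞) (Function.uncurry v) → ContDiff ℝ (⊤ : ℕ∞) (Function.uncurry w) →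
        ∀ (j k : Fin Nn) t x,
          Z (fun s y => ∑ α, ∑ β, F j k α β * pd α v s y * pd β w s y) t x
          = (∑ α, ∑ β, F j k α β * pd α (Z v) t x * pd β w t x)
            + (∑ α, ∑ β, F j k α β * pd α v t x * pd β (Z w) t x)
            + (∑ α, ∑ β, Ft j k α β * pd α v t x * pd β w t x) :=
  ⟨fun j k α β => -(∑ μ, (c μ α * F j k μ β + c μ β * F j k α μ)),
   fun j k => null_of_c (F j k) (hF j k) c hc,
   fun v w hv hw j k t x => key Z e c he hce hZd (F j k) v w hv hw t x⟩

-- test hZd for each field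

set_option maxHeartbeats 1000000 in
/-- the null condition for the semilinear coefficients `F^{jk,αβ}`
is preserved under differentiation by the ten vector fields
(Lemma 2.2, second part). -/
theorem null_condition_preserved_semilinear (Nn : ℕ)
    (F : Fin Nn → Fin Nn → Fin 4 → Fin 4 → ℝ) (hF : ∀ j k, NullC2 (F j k))
    (Z : Op)
    (hZ : Z ∈ ({px 0, px 1, px 2, Omg 0 1, Omg 0 2, Omg 1 2,
                Lk 0, Lk 1, Lk 2, Sop} : Set Op)) :
    ∃ Ft : Fin Nn → Fin Nn → Fin 4 → Fin 4 → ℝ,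
      (∀ j k, NullC2 (Ft j k)) ∧
      ∀ v w : Fn, ContDiff ℝ (⊤ : ℕ∞) (Function.uncurry v) → ContDiff ℝ (⊤ : ℕ∞) (Function.uncurry w) →
        ∀ j k t x,
          Z (fun s y => ∑ α, ∑ β, F j k α β * pd α v s y * pd β w s y) t x
          = (∑ α, ∑ β, F j k α β * pd α (Z v) t x * pd β w t x)
            + (∑ α, ∑ β, F j k α β * pd α v t x * pd β (Z w) t x)
            + (∑ α, ∑ β, Ft j k α β * pd α v t x * pd β w t x) := by

  simp only [Set.mem_insert_iff, Set.mem_singleton_iff] at hZ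
  rcases hZ with rfl|rfl|rfl|rfl|rfl|rfl|rfl|rfl|rfl|rfl
  · -- px 0
    refine build Nn F hF _ ![zfun, onefun, zfun, zfun] ![![0,0,0,0],![0,0,0,0],![0,0,0,0],![0,0,0,0]] ?_ ?_ ?_ ?_
    · intro μ; fin_cases μ <;>
        (first | exact contDiff_zfun | exact contDiff_onefun | exact contDiff_tfun | exact contDiff_cofun _ | exact contDiff_negcofun _)
    · intro α μ t x
      fin_cases α <;> fin_cases μ <;>
        norm_num [pd_zfun, pd_onefun, pd_negcofun, pd_cofun, pd_tfun, Evec] <;> rfl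
    · intro g t x
      rw [Fin.sum_univ_four]
      show px 0 g t x = 0 * pt g t x + 1 * px 0 g t x + 0 * px 1 g t x + 0 * px 2 g t x
      ring
    · intro X; norm_num [Matrix.vecHead, Matrix.vecTail, Matrix.cons_val_two, Matrix.cons_val_three, Matrix.tail_cons, Matrix.head_cons] <;> ring
  · -- px 1
    refine build Nn F hF _ ![zfun, zfun, onefun, zfun] ![![0,0,0,0],![0,0,0,0],![0,0,0,0],![0,0,0,0]] ?_ ?_ ?_ ?_
    · intro μ; fin_cases μ <;>
        (first | exact contDiff_zfun | exact contDiff_onefun | exact contDiff_tfun | exact contDiff_cofun _ | exact contDiff_negcofun _)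
    · intro α μ t x
      fin_cases α <;> fin_cases μ <;>
        norm_num [pd_zfun, pd_onefun, pd_negcofun, pd_cofun, pd_tfun, Evec] <;> rfl
    · intro g t x
      rw [Fin.sum_univ_four]
      show px 1 g t x = 0 * pt g t x + 0 * px 0 g t x + 1 * px 1 g t x + 0 * px 2 g t x
      ring
    · intro X; norm_num [Matrix.vecHead, Matrix.vecTail, Matrix.cons_val_two, Matrix.cons_val_three, Matrix.tail_cons, Matrix.head_cons] <;> ring
  · -- px 2
    refine build Nn F hF _ ![zfun, zfun, zfun, onefun] ![![0,0,0,0],![0,0,0,0],![0,0,0,0],![0,0,0,0]] ?_ ?_ ?_ ?_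
    · intro μ; fin_cases μ <;>
        (first | exact contDiff_zfun | exact contDiff_onefun | exact contDiff_tfun | exact contDiff_cofun _ | exact contDiff_negcofun _)
    · intro α μ t x
      fin_cases α <;> fin_cases μ <;>
        norm_num [pd_zfun, pd_onefun, pd_negcofun, pd_cofun, pd_tfun, Evec] <;> rfl
    · intro g t x
      rw [Fin.sum_univ_four]
      show px 2 g t x = 0 * pt g t x + 0 * px 0 g t x + 0 * px 1 g t x + 1 * px 2 g t x
      ring
    · intro X; norm_num [Matrix.vecHead, Matrix.vecTail, Matrix.cons_val_two, Matrix.cons_val_three, Matrix.tail_cons, Matrix.head_cons] <;> ring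
  · -- Omg 0 1
    refine build Nn F hF _ ![zfun, negcofun 1, cofun 0, zfun] ![![0,0,0,0],![0,0,1,0],![0,-1,0,0],![0,0,0,0]] ?_ ?_ ?_ ?_
    · intro μ; fin_cases μ <;>
        (first | exact contDiff_zfun | exact contDiff_onefun | exact contDiff_tfun | exact contDiff_cofun _ | exact contDiff_negcofun _)
    · intro α μ t x
      fin_cases α <;> fin_cases μ <;>
        norm_num [pd_zfun, pd_onefun, pd_negcofun, pd_cofun, pd_tfun, Evec] <;> rfl
    · intro g t x
      rw [Fin.sum_univ_four]
      show x 0 * px 1 g t x - x 1 * px 0 g t x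
        = 0 * pt g t x + -(x 1) * px 0 g t x + x 0 * px 1 g t x + 0 * px 2 g t x
      ring
    · intro X; norm_num [Matrix.vecHead, Matrix.vecTail, Matrix.cons_val_two, Matrix.cons_val_three, Matrix.tail_cons, Matrix.head_cons] <;> ring
  · -- Omg 0 2
    refine build Nn F hF _ ![zfun, negcofun 2, zfun, cofun 0] ![![0,0,0,0],![0,0,0,1],![0,0,0,0],![0,-1,0,0]] ?_ ?_ ?_ ?_
    · intro μ; fin_cases μ <;>
        (first | exact contDiff_zfun | exact contDiff_onefun | exact contDiff_tfun | exact contDiff_cofun _ | exact contDiff_negcofun _)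
    · intro α μ t x
      fin_cases α <;> fin_cases μ <;>
        norm_num [pd_zfun, pd_onefun, pd_negcofun, pd_cofun, pd_tfun, Evec] <;> rfl
    · intro g t x
      rw [Fin.sum_univ_four]
      show x 0 * px 2 g t x - x 2 * px 0 g t x
        = 0 * pt g t x + -(x 2) * px 0 g t x + 0 * px 1 g t x + x 0 * px 2 g t x
      ring
    · intro X; norm_num [Matrix.vecHead, Matrix.vecTail, Matrix.cons_val_two, Matrix.cons_val_three, Matrix.tail_cons, Matrix.head_cons] <;> ring
  · -- Omg 1 2
    refine build Nn F hF _ ![zfun, zfun, negcofun 2, cofun 1] ![![0,0,0,0],![0,0,0,0],![0,0,0,1],![0,0,-1,0]] ?_ ?_ ?_ ?_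
    · intro μ; fin_cases μ <;>
        (first | exact contDiff_zfun | exact contDiff_onefun | exact contDiff_tfun | exact contDiff_cofun _ | exact contDiff_negcofun _)
    · intro α μ t x
      fin_cases α <;> fin_cases μ <;>
        norm_num [pd_zfun, pd_onefun, pd_negcofun, pd_cofun, pd_tfun, Evec] <;> rfl
    · intro g t x
      rw [Fin.sum_univ_four]
      show x 1 * px 2 g t x - x 2 * px 1 g t x
        = 0 * pt g t x + 0 * px 0 g t x + -(x 2) * px 1 g t x + x 1 * px 2 g t x
      ring
    · intro X; norm_num [Matrix.vecHead, Matrix.vecTail, Matrix.cons_val_two, Matrix.cons_val_three, Matrix.tail_cons, Matrix.head_cons] <;> ring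
  · -- Lk 0
    refine build Nn F hF _ ![cofun 0, tfun, zfun, zfun] ![![0,1,0,0],![1,0,0,0],![0,0,0,0],![0,0,0,0]] ?_ ?_ ?_ ?_
    · intro μ; fin_cases μ <;>
        (first | exact contDiff_zfun | exact contDiff_onefun | exact contDiff_tfun | exact contDiff_cofun _ | exact contDiff_negcofun _)
    · intro α μ t x
      fin_cases α <;> fin_cases μ <;>
        norm_num [pd_zfun, pd_onefun, pd_negcofun, pd_cofun, pd_tfun, Evec] <;> rfl
    · intro g t x
      rw [Fin.sum_univ_four]
      show x 0 * pt g t x + t * px 0 g t x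
        = x 0 * pt g t x + t * px 0 g t x + 0 * px 1 g t x + 0 * px 2 g t x
      ring
    · intro X; norm_num [Matrix.vecHead, Matrix.vecTail, Matrix.cons_val_two, Matrix.cons_val_three, Matrix.tail_cons, Matrix.head_cons] <;> ring
  · -- Lk 1
    refine build Nn F hF _ ![cofun 1, zfun, tfun, zfun] ![![0,0,1,0],![0,0,0,0],![1,0,0,0],![0,0,0,0]] ?_ ?_ ?_ ?_
    · intro μ; fin_cases μ <;>
        (first | exact contDiff_zfun | exact contDiff_onefun | exact contDiff_tfun | exact contDiff_cofun _ | exact contDiff_negcofun _)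
    · intro α μ t x
      fin_cases α <;> fin_cases μ <;>
        norm_num [pd_zfun, pd_onefun, pd_negcofun, pd_cofun, pd_tfun, Evec] <;> rfl
    · intro g t x
      rw [Fin.sum_univ_four]
      show x 1 * pt g t x + t * px 1 g t x
        = x 1 * pt g t x + 0 * px 0 g t x + t * px 1 g t x + 0 * px 2 g t x
      ring
    · intro X; norm_num [Matrix.vecHead, Matrix.vecTail, Matrix.cons_val_two, Matrix.cons_val_three, Matrix.tail_cons, Matrix.head_cons] <;> ring
  · -- Lk 2
    refine build Nn F hF _ ![cofun 2, zfun, zfun, tfun] ![![0,0,0,1],![0,0,0,0],![0,0,0,0],![1,0,0,0]] ?_ ?_ ?_ ?_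
    · intro μ; fin_cases μ <;>
        (first | exact contDiff_zfun | exact contDiff_onefun | exact contDiff_tfun | exact contDiff_cofun _ | exact contDiff_negcofun _)
    · intro α μ t x
      fin_cases α <;> fin_cases μ <;>
        norm_num [pd_zfun, pd_onefun, pd_negcofun, pd_cofun, pd_tfun, Evec] <;> rfl
    · intro g t x
      rw [Fin.sum_univ_four]
      show x 2 * pt g t x + t * px 2 g t x
        = x 2 * pt g t x + 0 * px 0 g t x + 0 * px 1 g t x + t * px 2 g t x
      ring
    · intro X; norm_num [Matrix.vecHead, Matrix.vecTail, Matrix.cons_val_two, Matrix.cons_val_three, Matrix.tail_cons, Matrix.head_cons] <;> ring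
  · -- Sop
    refine build Nn F hF _ ![tfun, cofun 0, cofun 1, cofun 2] ![![1,0,0,0],![0,1,0,0],![0,0,1,0],![0,0,0,1]] ?_ ?_ ?_ ?_
    · intro μ; fin_cases μ <;>
        (first | exact contDiff_zfun | exact contDiff_onefun | exact contDiff_tfun | exact contDiff_cofun _ | exact contDiff_negcofun _)
    · intro α μ t x
      fin_cases α <;> fin_cases μ <;>
        norm_num [pd_zfun, pd_onefun, pd_negcofun, pd_cofun, pd_tfun, Evec] <;> rfl
    · intro g t x
      rw [Fin.sum_univ_four]
      show t * pt g t x + ∑ i, x i * px i g t x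
        = t * pt g t x + x 0 * px 0 g t x + x 1 * px 1 g t x + x 2 * px 2 g t x
      rw [Fin.sum_univ_three]; ring
    · intro X; norm_num [Matrix.vecHead, Matrix.vecTail, Matrix.cons_val_two, Matrix.cons_val_three, Matrix.tail_cons, Matrix.head_cons] <;> ring
end
end

section
/- (Ghost-weight energy identity.) Let h^{αβ} (α,β=0,…,3) be smooth real-valued functions on (0,T)×ℝ³ with h^{αβ}=h^{βα}, let (m^{αβ})=diag(−1,1,1,1), and define the operator Pv = (−m^{αβ}+h^{αβ})∂²_{αβ}v = ∂_t²v − Δv + h^{αβ}∂²_{αβ}v, and the energy-momentum tensor T^{αβ} = m^{αμ}(m^{βν}−h^{βν})(∂_μ v)(∂_ν v) − ½ m^{αβ}(m^{μν}−h^{μν})(∂_μ v)(∂_ν v) (summation over repeated Greek indices 0,…,3, ∂_0=∂_t). Then for every g∈C¹(ℝ) and every smooth function v on (0,T)×ℝ³, the identity ∂_β( e^{g(t−r)} T^{0β} ) − e^{g(t−r)}( (∂_t v)(Pv) + (∂_β h^{βν})(∂_t v)(∂_ν v) − ½(∂_t h^{μν})(∂_μ v)(∂_ν v) ) − e^{g(t−r)}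 g′(t−r)(−ω_β)T^{0β} = 0 holds pointwise at every (t,x)∈(0,T)×ℝ³ with x≠0, where r=|x|, ω_0=−1, and ω_k=x_k/r for k=1,2,3. -/
open MeasureTheory Real

noncomputable section

variable {N : ℕ}

/-- the Minkowski metric `diag(−1,1,1,1)` -/
def mink : Fin 4 → Fin 4 → ℝ := fun α β => if α = β then (if α = 0 then -1 else 1) else 0
/-- `ω_0 = −1`, `ω_k = x_k/|x|` -/
def omg4 (x : Fin 3 → ℝ) : Fin 4 → ℝ := Fin.cons (-1) fun k => x k / enorm3 x
/-- the variable-coefficient wave operator `P = ∂_t² − Δ + h^{αβ}∂²_{αβ}` -/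
def Pop (h : Fin 4 → Fin 4 → Fn) (v : Fn) : Fn := fun t x =>
  ∑ α, ∑ β, (-(mink α β) + h α β t x) * pd α (pd β v) t x
/-- the (modified) energy-momentum tensor `T^{αβ}` -/
def Tem (h : Fin 4 → Fin 4 → Fn) (v : Fn) (α β : Fin 4) : Fn := fun t x =>
  (∑ μ, ∑ ν, mink α μ * (mink β ν - h β ν t x) * pd μ v t x * pd ν v t x)
    - (1/2) * mink α β * (∑ μ, ∑ ν, (mink μ ν - h μ ν t x) * pd μ v t x * pd ν v t x)

def E4 : Fin 4 → ℝ × (Fin 3 → ℝ) := Fin.cons (1, 0) (fun k => (0, Pi.single k 1))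

lemma pd_eq_fderiv (f : Fn) {t : ℝ} {x : Fin 3 → ℝ}
    (hf : DifferentiableAt ℝ (Function.uncurry f) (t, x)) (α : Fin 4) :
    pd α f t x = fderiv ℝ (Function.uncurry f) (t, x) (E4 α) := by
  induction α using Fin.cases with
  | zero =>
    show deriv (fun s => f s x) t = _
    have h1 : HasDerivAt (fun s : ℝ => (s, x)) ((1 : ℝ), (0 : Fin 3 → ℝ)) t :=
      (hasDerivAt_id t).prodMk (hasDerivAt_const t x)
    have h2 := hf.hasFDerivAt.comp_hasDerivAt t h1
    simpa [E4, Function.uncurry, Function.comp_def] using h2.deriv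
  | succ k =>
    show fderiv ℝ (fun y => f t y) x (Pi.single k 1) = _
    have h1 : HasFDerivAt (fun y : Fin 3 → ℝ => (t, y))
        ((0 : (Fin 3 → ℝ) →L[ℝ] ℝ).prod (ContinuousLinearMap.id ℝ _)) x :=
      (hasFDerivAt_const t x).prodMk (hasFDerivAt_id x)
    have h2 := hf.hasFDerivAt.comp x h1
    have h3 : fderiv ℝ (fun y => f t y) x
        = (fderiv ℝ (Function.uncurry f) (t, x)).comp
            ((0 : (Fin 3 → ℝ) →L[ℝ] ℝ).prod (ContinuousLinearMap.id ℝ _)) := h2.fderiv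
    rw [h3]
    simp [E4, Function.uncurry]

variable {T : ℝ}

lemma isOpenU : IsOpen (Set.Ioo (0:ℝ) T ×ˢ (Set.univ : Set (Fin 3 → ℝ))) :=
  isOpen_Ioo.prod isOpen_univ

lemma memU {t : ℝ} {x : Fin 3 → ℝ} (ht : 0 < t) (hT : t < T) :
    (t, x) ∈ Set.Ioo (0:ℝ) T ×ˢ (Set.univ : Set (Fin 3 → ℝ)) := by
  exact ⟨⟨ht, hT⟩, trivial⟩

lemma smooth_pd {f : Fn}
    (hf : ContDiffOn ℝ (⊤ : ℕ∞) (Function.uncurry f) (Set.Ioo (0:ℝ) T ×ˢ Set.univ)) (α : Fin 4) :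
    ContDiffOn ℝ (⊤ : ℕ∞) (Function.uncurry (pd α f)) (Set.Ioo (0:ℝ) T ×ˢ Set.univ) := by
  intro p hp
  have hnh : (Set.Ioo (0:ℝ) T ×ˢ (Set.univ : Set (Fin 3 → ℝ))) ∈ nhds p :=
    isOpenU.mem_nhds hp
  have hca : ContDiffAt ℝ (⊤ : ℕ∞) (Function.uncurry f) p := (hf p hp).contDiffAt hnh
  have hW : ContDiffAt ℝ (⊤ : ℕ∞) (fun q => fderiv ℝ (Function.uncurry f) q (E4 α)) p :=
    (hca.fderiv_right (by simp)).clm_apply contDiffAt_const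
  have hev : Function.uncurry (pd α f) =ᶠ[nhds p] fun q => fderiv ℝ (Function.uncurry f) q (E4 α) := by
    filter_upwards [hnh] with q hq
    have : DifferentiableAt ℝ (Function.uncurry f) q :=
      ((hf q hq).contDiffAt (isOpenU.mem_nhds hq)).differentiableAt (by simp)
    exact pd_eq_fderiv f (t := q.1) (x := q.2) this α
  exact ((hW.congr_of_eventuallyEq hev)).contDiffWithinAt

lemma pd_comm_s19 {f : Fn} (hf : ContDiffOn ℝ (⊤ : ℕ∞) (Function.uncurry f) (Set.Ioo (0:ℝ) T ×ˢ Set.univ))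
    {t : ℝ} {x : Fin 3 → ℝ} (ht : 0 < t) (hT : t < T) (α β : Fin 4) :
    pd α (pd β f) t x = pd β (pd α f) t x := by
  have hp : ((t, x) : ℝ × (Fin 3 → ℝ)) ∈ Set.Ioo (0:ℝ) T ×ˢ (Set.univ : Set (Fin 3 → ℝ)) := memU ht hT
  have hnh := isOpenU.mem_nhds hp
  have hca : ContDiffAt ℝ (⊤ : ℕ∞) (Function.uncurry f) (t, x) := (hf _ hp).contDiffAt hnh
  have key : ∀ γ δ : Fin 4, pd γ (pd δ f) t x
      = fderiv ℝ (fderiv ℝ (Function.uncurry f)) (t, x) (E4 γ) (E4 δ) := by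
    intro γ δ
    have hev : Function.uncurry (pd δ f) =ᶠ[nhds ((t,x) : ℝ × (Fin 3 → ℝ))]
        fun q => fderiv ℝ (Function.uncurry f) q (E4 δ) := by
      filter_upwards [hnh] with q hq
      have : DifferentiableAt ℝ (Function.uncurry f) q :=
        ((hf q hq).contDiffAt (isOpenU.mem_nhds hq)).differentiableAt (by simp)
      exact pd_eq_fderiv f (t := q.1) (x := q.2) this δ
    have hd2 : DifferentiableAt ℝ (fderiv ℝ (Function.uncurry f)) (t, x) :=
      (hca.fderiv_right (m := 1) (WithTop.coe_le_coe.2 le_top)).differentiableAt one_ne_zero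
    have hWd : DifferentiableAt ℝ (fun q => fderiv ℝ (Function.uncurry f) q (E4 δ)) (t, x) :=
      hd2.clm_apply (differentiableAt_const _)
    have hdd : DifferentiableAt ℝ (Function.uncurry (pd δ f)) (t, x) :=
      hWd.congr_of_eventuallyEq hev
    rw [pd_eq_fderiv (pd δ f) hdd γ, Filter.EventuallyEq.fderiv_eq hev]
    have hfd : HasFDerivAt (fun q => fderiv ℝ (Function.uncurry f) q (E4 δ))
        (((fderiv ℝ (fderiv ℝ (Function.uncurry f)) (t, x)).flip (E4 δ))) (t, x) := by
      have := hd2.hasFDerivAt.clm_apply (hasFDerivAt_const (E4 δ) ((t,x) : ℝ × (Fin 3 → ℝ)))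
      simpa using this
    rw [hfd.fderiv]
    rfl
  rw [key α β, key β α]
  exact (hca.isSymmSndFDerivAt (by rw [minSmoothness_of_isRCLikeNormedField]; exact WithTop.coe_le_coe.2 le_top)) (E4 α) (E4 β)

section pointrules
variable {t : ℝ} {x : Fin 3 → ℝ}

lemma pd_fun_mul {f g : Fn} (hf : DifferentiableAt ℝ (Function.uncurry f) (t, x))
    (hg : DifferentiableAt ℝ (Function.uncurry g) (t, x)) (β : Fin 4) :
    pd β (fun s y => f s y * g s y) t x = pd β f t x * g t x + f t x * pd β g t x := by
  have h1 : Function.uncurry (fun s y => f s y * g s y)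
      = fun q => Function.uncurry f q * Function.uncurry g q := rfl
  rw [pd_eq_fderiv _ (by rw [h1]; exact hf.mul hg) β, h1, fderiv_fun_mul hf hg,
    pd_eq_fderiv f hf β, pd_eq_fderiv g hg β]
  simp [Function.uncurry]
  ring

lemma pd_fun_sum {ι : Type*} {s : Finset ι} {F : ι → Fn}
    (hF : ∀ i ∈ s, DifferentiableAt ℝ (Function.uncurry (F i)) (t, x)) (β : Fin 4) :
    pd β (fun s' y => ∑ i ∈ s, F i s' y) t x = ∑ i ∈ s, pd β (F i) t x := by
  have h1 : Function.uncurry (fun s' y => ∑ i ∈ s, F i s' y)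
      = fun q => ∑ i ∈ s, Function.uncurry (F i) q := rfl
  rw [pd_eq_fderiv _ (by rw [h1]; exact DifferentiableAt.fun_sum hF) β, h1, fderiv_fun_sum hF]
  rw [ContinuousLinearMap.sum_apply]
  exact Finset.sum_congr rfl fun i hi => (pd_eq_fderiv (F i) (hF i hi) β).symm

lemma pd_fun_const_mul {f : Fn} (hf : DifferentiableAt ℝ (Function.uncurry f) (t, x))
    (c : ℝ) (β : Fin 4) :
    pd β (fun s y => c * f s y) t x = c * pd β f t x := by
  have h1 : Function.uncurry (fun s y => c * f s y)
      = fun q => c * Function.uncurry f q := rfl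
  rw [pd_eq_fderiv _ (by rw [h1]; exact hf.const_mul c) β, h1, fderiv_const_mul hf c,
    pd_eq_fderiv f hf β]
  simp

lemma pd_fun_const_sub {f : Fn} (hf : DifferentiableAt ℝ (Function.uncurry f) (t, x))
    (c : ℝ) (β : Fin 4) :
    pd β (fun s y => c - f s y) t x = -pd β f t x := by
  have h1 : Function.uncurry (fun s y => c - f s y)
      = fun q => c - Function.uncurry f q := rfl
  rw [pd_eq_fderiv _ (by rw [h1]; exact (differentiableAt_const c).sub hf) β, h1,
    fderiv_const_sub, pd_eq_fderiv f hf β]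
  simp

lemma pd_fun_sub {f g : Fn} (hf : DifferentiableAt ℝ (Function.uncurry f) (t, x))
    (hg : DifferentiableAt ℝ (Function.uncurry g) (t, x)) (β : Fin 4) :
    pd β (fun s y => f s y - g s y) t x = pd β f t x - pd β g t x := by
  have h1 : Function.uncurry (fun s y => f s y - g s y)
      = fun q => Function.uncurry f q - Function.uncurry g q := rfl
  rw [pd_eq_fderiv _ (by rw [h1]; exact hf.sub hg) β, h1, fderiv_fun_sub hf hg,
    pd_eq_fderiv f hf β, pd_eq_fderiv g hg β]
  simp

lemma pd_fun_mul3 {q b1 b2 : Fn} (hq : DifferentiableAt ℝ (Function.uncurry q) (t, x))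
    (hb1 : DifferentiableAt ℝ (Function.uncurry b1) (t, x))
    (hb2 : DifferentiableAt ℝ (Function.uncurry b2) (t, x)) (β : Fin 4) :
    pd β (fun s y => q s y * b1 s y * b2 s y) t x
      = pd β q t x * b1 t x * b2 t x + q t x * pd β b1 t x * b2 t x
        + q t x * b1 t x * pd β b2 t x := by
  have h2 := pd_fun_mul (f := fun s y => q s y * b1 s y) (g := b2) (hq.mul hb1) hb2 β
  rw [h2, pd_fun_mul hq hb1 β]
  ring
end pointrules

lemma sum_sq_pos {x : Fin 3 → ℝ} (hx : x ≠ 0) : (0:ℝ) < ∑ i, (x i) ^ 2 := by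
  rcases Function.ne_iff.1 hx with ⟨i, hi⟩
  exact Finset.sum_pos' (fun j _ => sq_nonneg _)
    ⟨i, Finset.mem_univ i, lt_of_le_of_ne (sq_nonneg _) (Ne.symm (pow_ne_zero 2 hi))⟩

lemma enorm3_pos {x : Fin 3 → ℝ} (hx : x ≠ 0) : 0 < enorm3 x :=
  Real.sqrt_pos.2 (sum_sq_pos hx)

lemma enorm3_hasFDeriv {x : Fin 3 → ℝ} (hx : x ≠ 0) :
    ∃ L : (Fin 3 → ℝ) →L[ℝ] ℝ, HasFDerivAt enorm3 L x ∧
      ∀ k, L (Pi.single k 1) = x k / enorm3 x := by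
  have hq : HasFDerivAt (fun y : Fin 3 → ℝ => ∑ i, (y i) ^ 2)
      (∑ i, (2 * x i) • (ContinuousLinearMap.proj i : (Fin 3 → ℝ) →L[ℝ] ℝ)) x := by
    apply HasFDerivAt.fun_sum
    intro i _
    have h1 : HasDerivAt (fun s : ℝ => s ^ 2) (2 * x i) (x i) := by
      simpa using hasDerivAt_pow 2 (x i)
    have h2 : HasFDerivAt (fun y : Fin 3 → ℝ => y i)
        (ContinuousLinearMap.proj i : (Fin 3 → ℝ) →L[ℝ] ℝ) x :=
      (ContinuousLinearMap.proj i : (Fin 3 → ℝ) →L[ℝ] ℝ).hasFDerivAt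
    exact h1.comp_hasFDerivAt x h2
  have hs : HasDerivAt Real.sqrt (1 / (2 * Real.sqrt (∑ i, (x i) ^ 2))) (∑ i, (x i) ^ 2) :=
    Real.hasDerivAt_sqrt (ne_of_gt (sum_sq_pos hx))
  refine ⟨_, hs.comp_hasFDerivAt x hq, ?_⟩
  intro k
  have hr : enorm3 x ≠ 0 := ne_of_gt (enorm3_pos hx)
  have hL : (∑ i, (2 * x i) • (ContinuousLinearMap.proj i : (Fin 3 → ℝ) →L[ℝ] ℝ))
      (Pi.single k 1) = 2 * x k := by
    rw [ContinuousLinearMap.sum_apply]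
    simp [Pi.single_apply]
  simp only [ContinuousLinearMap.coe_smul', Pi.smul_apply, smul_eq_mul, hL]
  rw [show Real.sqrt (∑ i, (x i) ^ 2) = enorm3 x from rfl]
  field_simp

section weight
variable {g : ℝ → ℝ} {t : ℝ} {x : Fin 3 → ℝ}

lemma weight_diff (hg : ContDiff ℝ 1 g) (hx : x ≠ 0) :
    DifferentiableAt ℝ
      (Function.uncurry (fun s y => Real.exp (g (s - enorm3 y)))) (t, x) := by
  obtain ⟨L, hL, -⟩ := enorm3_hasFDeriv hx
  have h1 : DifferentiableAt ℝ (fun q : ℝ × (Fin 3 → ℝ) => q.1 - enorm3 q.2) (t, x) :=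
    (differentiableAt_fst).sub (DifferentiableAt.comp (g := enorm3) (f := Prod.snd) _ hL.differentiableAt differentiableAt_snd)
  exact (Real.differentiable_exp.differentiableAt).comp _
    (((hg.differentiable one_ne_zero).differentiableAt).comp _ h1)

lemma pd_weight (hg : ContDiff ℝ 1 g) (hx : x ≠ 0) (β : Fin 4) :
    pd β (fun s y => Real.exp (g (s - enorm3 y))) t x
      = Real.exp (g (t - enorm3 x)) * deriv g (t - enorm3 x) * (-(omg4 x β)) := by
  have hg' : HasDerivAt g (deriv g (t - enorm3 x)) (t - enorm3 x) :=
    ((hg.differentiable one_ne_zero) (t - enorm3 x)).hasDerivAt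
  induction β using Fin.cases with
  | zero =>
    show deriv (fun s => Real.exp (g (s - enorm3 x))) t = _
    have h1 : HasDerivAt (fun s : ℝ => s - enorm3 x) 1 t := (hasDerivAt_id t).sub_const _
    have h2 : HasDerivAt (fun s : ℝ => g (s - enorm3 x)) (deriv g (t - enorm3 x) * 1) t :=
      hg'.comp t h1
    have h3 := h2.exp
    rw [h3.deriv]
    simp [omg4]
  | succ k =>
    show fderiv ℝ (fun y => Real.exp (g (t - enorm3 y))) x (Pi.single k 1) = _
    obtain ⟨L, hL, hLk⟩ := enorm3_hasFDeriv hx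
    have h1 : HasFDerivAt (fun y : Fin 3 → ℝ => t - enorm3 y) (-L) x := by
      simpa using (hasFDerivAt_const t x).fun_sub hL
    have h2 : HasFDerivAt (fun y : Fin 3 → ℝ => g (t - enorm3 y))
        (deriv g (t - enorm3 x) • (-L)) x := hg'.comp_hasFDerivAt x h1
    have h3 := h2.exp
    rw [h3.fderiv]
    simp only [ContinuousLinearMap.coe_smul', Pi.smul_apply, ContinuousLinearMap.neg_apply,
      smul_eq_mul, hLk, omg4, Fin.cons_succ]
    ring
end weight

set_option maxHeartbeats 2000000 in
lemma core_alg (H : Fin 4 → Fin 4 → ℝ) (DH : Fin 4 → Fin 4 → Fin 4 → ℝ)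
    (D : Fin 4 → ℝ) (DD : Fin 4 → Fin 4 → ℝ)
    (hH : ∀ μ ν, H μ ν = H ν μ) (hDD : ∀ α β, DD α β = DD β α) :
    (∑ β : Fin 4, ((∑ μ : Fin 4, ∑ ν : Fin 4,
        (mink 0 μ * (-(DH β β ν)) * D μ * D ν
          + mink 0 μ * (mink β ν - H β ν) * DD β μ * D ν
          + mink 0 μ * (mink β ν - H β ν) * D μ * DD β ν))
      - 1/2 * mink 0 β * (∑ μ : Fin 4, ∑ ν : Fin 4,
        ((-(DH β μ ν)) * D μ * D ν + (mink μ ν - H μ ν) * DD β μ * D ν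
          + (mink μ ν - H μ ν) * D μ * DD β ν))))
    = D 0 * (∑ α : Fin 4, ∑ β : Fin 4, (-(mink α β) + H α β) * DD α β)
      + (∑ β : Fin 4, ∑ ν : Fin 4, DH β β ν * D 0 * D ν)
      - 1/2 * (∑ μ : Fin 4, ∑ ν : Fin 4, DH 0 μ ν * D μ * D ν) := by
  simp [Fin.sum_univ_four, mink]
  rw [hDD 1 0, hDD 2 0, hDD 3 0, hH 1 0, hH 2 0, hH 3 0, hH 2 1, hH 3 1, hH 3 2]
  ring

lemma pd_sum2 {G : Fin 4 → Fin 4 → Fn} {t : ℝ} {x : Fin 3 → ℝ}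
    (hG : ∀ μ ν, DifferentiableAt ℝ (Function.uncurry (G μ ν)) (t, x)) (β : Fin 4) :
    pd β (fun s y => ∑ μ, ∑ ν, G μ ν s y) t x = ∑ μ, ∑ ν, pd β (G μ ν) t x := by
  rw [pd_fun_sum (F := fun μ => fun s y => ∑ ν, G μ ν s y)
    (fun μ _ => DifferentiableAt.fun_sum (fun ν _ => hG μ ν)) β]
  exact Finset.sum_congr rfl fun μ _ => pd_fun_sum (fun ν _ => hG μ ν) β

section pdTem
variable {h : Fin 4 → Fin 4 → Fn} {v : Fn} {t : ℝ} {x : Fin 3 → ℝ}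

lemma pd_Tem
    (hDh : ∀ μ ν, DifferentiableAt ℝ (Function.uncurry (h μ ν)) (t, x))
    (hDv : ∀ μ, DifferentiableAt ℝ (Function.uncurry (pd μ v)) (t, x))
    (β' β : Fin 4) :
    pd β (Tem h v 0 β') t x =
      (∑ μ, ∑ ν, (mink 0 μ * (-(pd β (h β' ν) t x)) * pd μ v t x * pd ν v t x
        + mink 0 μ * (mink β' ν - h β' ν t x) * pd β (pd μ v) t x * pd ν v t x
        + mink 0 μ * (mink β' ν - h β' ν t x) * pd μ v t x * pd β (pd ν v) t x))
      - 1/2 * mink 0 β' * (∑ μ, ∑ ν, ((-(pd β (h μ ν) t x)) * pd μ v t x * pd ν v t x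
        + (mink μ ν - h μ ν t x) * pd β (pd μ v) t x * pd ν v t x
        + (mink μ ν - h μ ν t x) * pd μ v t x * pd β (pd ν v) t x)) := by
  have hd1 : ∀ μ ν : Fin 4, DifferentiableAt ℝ (Function.uncurry
      (fun s y => mink 0 μ * (mink β' ν - h β' ν s y) * pd μ v s y * pd ν v s y)) (t, x) :=
    fun μ ν => ((((differentiableAt_const _).sub (hDh β' ν)).const_mul _).mul (hDv μ)).mul (hDv ν)
  have hd2 : ∀ μ ν : Fin 4, DifferentiableAt ℝ (Function.uncurry
      (fun s y => (mink μ ν - h μ ν s y) * pd μ v s y * pd ν v s y)) (t, x) :=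
    fun μ ν => (((differentiableAt_const _).sub (hDh μ ν)).mul (hDv μ)).mul (hDv ν)
  have hA : DifferentiableAt ℝ (Function.uncurry
      (fun s y => ∑ μ, ∑ ν, mink 0 μ * (mink β' ν - h β' ν s y) * pd μ v s y * pd ν v s y)) (t, x) :=
    DifferentiableAt.fun_sum fun μ _ => DifferentiableAt.fun_sum fun ν _ => hd1 μ ν
  have hS : DifferentiableAt ℝ (Function.uncurry
      (fun s y => ∑ μ, ∑ ν, (mink μ ν - h μ ν s y) * pd μ v s y * pd ν v s y)) (t, x) :=
    DifferentiableAt.fun_sum fun μ _ => DifferentiableAt.fun_sum fun ν _ => hd2 μ ν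
  have e1 : pd β (Tem h v 0 β') t x
      = pd β (fun s y => ∑ μ, ∑ ν, mink 0 μ * (mink β' ν - h β' ν s y) * pd μ v s y * pd ν v s y) t x
        - pd β (fun s y => (1/2) * mink 0 β' *
            (∑ μ, ∑ ν, (mink μ ν - h μ ν s y) * pd μ v s y * pd ν v s y)) t x :=
    pd_fun_sub hA (hS.const_mul _) β
  rw [e1, pd_fun_const_mul hS _ β, pd_sum2 hd1 β, pd_sum2 hd2 β]
  have eA : ∀ μ ν : Fin 4,
      pd β (fun s y => mink 0 μ * (mink β' ν - h β' ν s y) * pd μ v s y * pd ν v s y) t x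
        = mink 0 μ * (-(pd β (h β' ν) t x)) * pd μ v t x * pd ν v t x
          + mink 0 μ * (mink β' ν - h β' ν t x) * pd β (pd μ v) t x * pd ν v t x
          + mink 0 μ * (mink β' ν - h β' ν t x) * pd μ v t x * pd β (pd ν v) t x := by
    intro μ ν
    rw [pd_fun_mul3 (((differentiableAt_const _).sub (hDh β' ν)).const_mul _) (hDv μ) (hDv ν) β,
      pd_fun_const_mul (f := fun s y => mink β' ν - h β' ν s y) ((differentiableAt_const _).sub (hDh β' ν)) _ β,
      pd_fun_const_sub (hDh β' ν) _ β]
  have eS : ∀ μ ν : Fin 4,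
      pd β (fun s y => (mink μ ν - h μ ν s y) * pd μ v s y * pd ν v s y) t x
        = (-(pd β (h μ ν) t x)) * pd μ v t x * pd ν v t x
          + (mink μ ν - h μ ν t x) * pd β (pd μ v) t x * pd ν v t x
          + (mink μ ν - h μ ν t x) * pd μ v t x * pd β (pd ν v) t x := by
    intro μ ν
    rw [pd_fun_mul3 (q := fun s y => mink μ ν - h μ ν s y) ((differentiableAt_const _).sub (hDh μ ν)) (hDv μ) (hDv ν) β,
      pd_fun_const_sub (hDh μ ν) _ β]
  simp only [eA, eS]

lemma diff_Tem
    (hDh : ∀ μ ν, DifferentiableAt ℝ (Function.uncurry (h μ ν)) (t, x))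
    (hDv : ∀ μ, DifferentiableAt ℝ (Function.uncurry (pd μ v)) (t, x)) (β : Fin 4) :
    DifferentiableAt ℝ (Function.uncurry (Tem h v 0 β)) (t, x) := by
  apply DifferentiableAt.sub
  · exact DifferentiableAt.fun_sum fun μ _ => DifferentiableAt.fun_sum fun ν _ =>
      ((((differentiableAt_const _).sub (hDh β ν)).const_mul _).mul (hDv μ)).mul (hDv ν)
  · exact (DifferentiableAt.fun_sum fun μ _ => DifferentiableAt.fun_sum fun ν _ =>
      (((differentiableAt_const _).sub (hDh μ ν)).mul (hDv μ)).mul (hDv ν)).const_mul _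
end pdTem


/-- Alinhac's ghost-weight energy identity
(Lemma 2.8). -/
theorem ghost_weight_energy_identity (T : ℝ) (h : Fin 4 → Fin 4 → Fn)
    (hsm : ∀ α β, ContDiffOn ℝ (⊤ : ℕ∞) (fun p : ℝ × (Fin 3 → ℝ) => h α β p.1 p.2)
      (Set.Ioo 0 T ×ˢ Set.univ))
    (hsymm : ∀ α β t x, h α β t x = h β α t x)
    (g : ℝ → ℝ) (hg : ContDiff ℝ 1 g)
    (v : Fn)
    (hv : ContDiffOn ℝ (⊤ : ℕ∞) (fun p : ℝ × (Fin 3 → ℝ) => v p.1 p.2) (Set.Ioo 0 T ×ˢ Set.univ)) :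
    ∀ t x, 0 < t → t < T → x ≠ 0 →
      (∑ β, pd β (fun s y => Real.exp (g (s - enorm3 y)) * Tem h v 0 β s y) t x)
        - Real.exp (g (t - enorm3 x)) *
            (pt v t x * Pop h v t x
              + (∑ β, ∑ ν, pd β (h β ν) t x * pt v t x * pd ν v t x)
              - (1/2) * ∑ μ, ∑ ν, pt (h μ ν) t x * pd μ v t x * pd ν v t x)
        - Real.exp (g (t - enorm3 x)) * deriv g (t - enorm3 x) *
            (∑ β, (-(omg4 x β)) * Tem h v 0 β t x) = 0 := by
  intro t x ht hT hx
  have hp : ((t, x) : ℝ × (Fin 3 → ℝ)) ∈ Set.Ioo (0:ℝ) T ×ˢ (Set.univ : Set (Fin 3 → ℝ)) :=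
    memU ht hT
  have hnh := isOpenU.mem_nhds hp
  have hv' : ContDiffOn ℝ (⊤ : ℕ∞) (Function.uncurry v) (Set.Ioo (0:ℝ) T ×ˢ Set.univ) := hv
  have hDv : ∀ μ, DifferentiableAt ℝ (Function.uncurry (pd μ v)) (t, x) := fun μ =>
    ((smooth_pd hv' μ _ hp).contDiffAt hnh).differentiableAt (by simp)
  have hDh : ∀ μ ν, DifferentiableAt ℝ (Function.uncurry (h μ ν)) (t, x) := fun μ ν =>
    ((hsm μ ν _ hp).contDiffAt hnh).differentiableAt (by simp)
  have hDT : ∀ β, DifferentiableAt ℝ (Function.uncurry (Tem h v 0 β)) (t, x) :=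
    diff_Tem hDh hDv
  have key : ∀ β : Fin 4,
      pd β (fun s y => Real.exp (g (s - enorm3 y)) * Tem h v 0 β s y) t x
        = Real.exp (g (t - enorm3 x)) * deriv g (t - enorm3 x) *
            ((-(omg4 x β)) * Tem h v 0 β t x)
          + Real.exp (g (t - enorm3 x)) * pd β (Tem h v 0 β) t x := by
    intro β
    rw [pd_fun_mul (weight_diff hg hx) (hDT β) β, pd_weight hg hx β]
    ring
  have main : ∑ β : Fin 4, pd β (Tem h v 0 β) t x
      = pt v t x * Pop h v t x
        + (∑ β, ∑ ν, pd β (h β ν) t x * pt v t x * pd ν v t x)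
        - (1/2) * ∑ μ, ∑ ν, pt (h μ ν) t x * pd μ v t x * pd ν v t x := by
    rw [Finset.sum_congr rfl fun β _ => pd_Tem hDh hDv β β]
    exact core_alg (fun μ ν => h μ ν t x) (fun γ μ ν => pd γ (h μ ν) t x)
      (fun μ => pd μ v t x) (fun α β => pd α (pd β v) t x)
      (fun μ ν => hsymm μ ν t x) (fun α β => pd_comm_s19 hv' ht hT α β)
  rw [Finset.sum_congr rfl fun β _ => key β, Finset.sum_add_distrib,
    ← Finset.mul_sum, ← Finset.mul_sum, main]
  ring

end
end
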